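/- arXiv:1805.11693 — 12 statements merged into one kernel-verified Lean document; each statement's English description precedes it below -/
import Mathlib

section
/- Let G₁ and G₂ be finite groups whose orders are coprime, i.e. gcd(|G₁|, |G₂|) = 1. Then ψ(G₁ × G₂) = ψ(G₁) · ψ(G₂), where ψ denotes the sum of element orders. -/
/-- `psi G` is the sum of the orders of all elements of the finite group `G`. -/
noncomputable def psi (G : Type*) [Monoid G] [Fintype G] : ℕ := ∑ a : G, orderOf a

theorem psi_mul_of_coprime (G₁ G₂ : Type*) [Group G₁] [Group G₂] [Fintype G₁] [Fintype G₂]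
    (h : Nat.Coprime (Fintype.card G₁) (Fintype.card G₂)) :
    psi (G₁ × G₂) = psi G₁ * psi G₂ := by
  unfold psi
  rw [Fintype.sum_prod_type, Finset.sum_mul_sum]
  refine Finset.sum_congr rfl fun x _ => Finset.sum_congr rfl fun y _ => ?_
  rw [Prod.orderOf_mk]
  exact Nat.Coprime.lcm_eq_mul
    ((h.coprime_dvd_left (orderOf_dvd_card)).coprime_dvd_right (orderOf_dvd_card))
end

section
/- Let p be a prime and let G = Z_{p^{α₁}} × Z_{p^{α₂}} × ⋯ × Z_{p^{α_k}} be a finite abelian p-group with 1 ≤ α₁ ≤ α₂ ≤ … ≤ α_k. Then ψ(G) = 1 + ∑_{α=1}^{α_k} ( p^{2α} · f(α) − p^{2α−1} · f(α−1) ), where f(α) = p^{∑_{i=1}^{k−1} min(α_i, α)} (equivalently, f(α) = p^{(k−j)α + α₁ + ⋯ + α_{j−1}} whenever α_{j−1} ≤ α ≤ α_j, with the conventions α₀ = 0 and f(α) = p^{α₁+⋯+α_{k−1}} for α ≥ α_{k−1}). -/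
section

open Finset

section FiniteMonoid

variable {G : Type*} [Monoid G] [Fintype G]

theorem psi_eq_sum_divisors {n : ℕ} (hn : n ≠ 0) (hG : ∀ x : G, x ^ n = 1) :
    psi G = ∑ m ∈ n.divisors, m * #{x : G | orderOf x = m} := by
  have hdvd : ∀ x ∈ (univ : Finset G), orderOf x ∈ n.divisors := fun x _ =>
    Nat.mem_divisors.mpr ⟨orderOf_dvd_of_pow_eq_one (hG x), hn⟩
  rw [psi, ← sum_fiberwise_of_maps_to hdvd]
  refine sum_congr rfl fun m _ => ?_
  rw [sum_congr rfl fun x hx => (mem_filter.mp hx).2, sum_const, smul_eq_mul, mul_comm]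

variable [DecidableEq G] {p : ℕ}

theorem card_pow_prime_pow_eq_one_eq_sum (hp : p.Prime) (j : ℕ) :
    #{x : G | x ^ p ^ j = 1} = ∑ i ∈ range (j + 1), #{x : G | orderOf x = p ^ i} := by
  rw [← sum_card_orderOf_eq_card_pow_eq_one (pow_ne_zero j hp.ne_zero), Nat.divisors_prime_pow hp,
    sum_map]
  rfl

theorem psi_eq_of_pow_prime_pow_eq_one {A : ℕ} (hp : p.Prime) (hG : ∀ x : G, x ^ p ^ A = 1) :
    (psi G : ℤ) = 1 + ∑ j ∈ Icc 1 A,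
      (p : ℤ) ^ j * (#{x : G | x ^ p ^ j = 1} - #{x : G | x ^ p ^ (j - 1) = 1}) := by
  have hone : #{x : G | orderOf x = p ^ 0} = 1 := by simp [orderOf_eq_one_iff, filter_eq']
  have hstep : ∀ i, (#{x : G | x ^ p ^ (i + 1) = 1} : ℤ) - #{x : G | x ^ p ^ i = 1} =
      #{x : G | orderOf x = p ^ (i + 1)} := fun i => by
    rw [card_pow_prime_pow_eq_one_eq_sum hp (i + 1), sum_range_succ,
      card_pow_prime_pow_eq_one_eq_sum hp i]
    push_cast
    ring
  rw [psi_eq_sum_divisors (pow_ne_zero A hp.ne_zero) hG, Nat.divisors_prime_pow hp, sum_map,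
    sum_range_succ', ← Ico_add_one_right_eq_Icc, sum_Ico_eq_sum_range, Nat.add_sub_cancel]
  simp only [Function.Embedding.coeFn_mk, hone, add_comm 1, Nat.add_sub_cancel, hstep]
  push_cast
  ring

end FiniteMonoid

theorem IsCyclic.card_pow_eq_one_eq_gcd {G : Type*} [CommGroup G] [IsCyclic G] [Fintype G]
    [DecidableEq G] (n : ℕ) : #{x : G | x ^ n = 1} = (Fintype.card G).gcd n := by
  rw [← Nat.card_eq_fintype_card, ← IsCyclic.card_powMonoidHom_ker, ← Fintype.card_subtype,
    ← Nat.card_eq_fintype_card]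
  rfl

theorem card_pi_pow_eq_one {ι : Type*} [Fintype ι] [DecidableEq ι] {G : ι → Type*}
    [∀ i, Monoid (G i)] [∀ i, Fintype (G i)] [∀ i, DecidableEq (G i)] (n : ℕ) :
    #{x : ∀ i, G i | x ^ n = 1} = ∏ i, #{y : G i | y ^ n = 1} := by
  rw [← Fintype.card_piFinset]
  congr 1
  ext x
  simp [funext_iff]

theorem Nat.gcd_pow_pow (p a b : ℕ) : (p ^ a).gcd (p ^ b) = p ^ min a b := by
  rcases le_total a b with h | h
  · rw [Nat.gcd_eq_left (pow_dvd_pow p h), min_eq_left h]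
  · rw [Nat.gcd_eq_right (pow_dvd_pow p h), min_eq_right h]

theorem card_pi_zmod_pow_prime_pow_eq_one {ι : Type*} [Fintype ι] [DecidableEq ι] (p : ℕ)
    [Fact p.Prime] (α : ι → ℕ) (j : ℕ) :
    #{x : ∀ i, Multiplicative (ZMod (p ^ α i)) | x ^ p ^ j = 1} = p ^ ∑ i, min (α i) j := by
  simp only [card_pi_pow_eq_one, IsCyclic.card_pow_eq_one_eq_gcd, Fintype.card_multiplicative,
    ZMod.card, Nat.gcd_pow_pow, prod_pow_eq_pow_sum]

end

theorem psi_abelian_p_group_general (p : ℕ) [Fact p.Prime] (k : ℕ) (α : Fin (k + 1) → ℕ)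
    (hmono : Monotone α) :
    (psi (∀ i, Multiplicative (ZMod (p ^ α i))) : ℤ) =
      1 + ∑ a ∈ Finset.Icc 1 (α (Fin.last k)),
        ((p : ℤ) ^ (2 * a) * (p : ℤ) ^ (∑ i : Fin k, min (α i.castSucc) a)
          - (p : ℤ) ^ (2 * a - 1) * (p : ℤ) ^ (∑ i : Fin k, min (α i.castSucc) (a - 1))) := by
  have hexp : ∀ x : ∀ i, Multiplicative (ZMod (p ^ α i)), x ^ p ^ α (Fin.last k) = 1 := by
    intro x
    funext i
    refine orderOf_dvd_iff_pow_eq_one.mp (orderOf_dvd_card.trans ?_)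
    simpa using pow_dvd_pow p (hmono (Fin.le_last i))
  have hlast : ∀ b ≤ α (Fin.last k), ∑ i, min (α i) b = ∑ i : Fin k, min (α i.castSucc) b + b :=
    fun b hb => by rw [Fin.sum_univ_castSucc, min_eq_right hb]
  rw [psi_eq_of_pow_prime_pow_eq_one Fact.out hexp]
  congr 1
  refine Finset.sum_congr rfl fun a ha => ?_
  obtain ⟨ha1, haA⟩ := Finset.mem_Icc.mp ha
  rw [card_pi_zmod_pow_prime_pow_eq_one, card_pi_zmod_pow_prime_pow_eq_one, hlast a haA,
    hlast (a - 1) (by omega), show 2 * a - 1 = a + (a - 1) by omega, two_mul]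
  push_cast
  ring

theorem psi_abelian_p_group (p : ℕ) [Fact p.Prime] (k : ℕ) (α : Fin (k + 1) → ℕ)
    (h1 : ∀ i, 1 ≤ α i) (hmono : Monotone α) :
    (psi (∀ i, Multiplicative (ZMod (p ^ α i))) : ℤ) =
      1 + ∑ a ∈ Finset.Icc 1 (α (Fin.last k)),
        ((p : ℤ) ^ (2 * a) * (p : ℤ) ^ (∑ i : Fin k, min (α i.castSucc) a)
          - (p : ℤ) ^ (2 * a - 1) * (p : ℤ) ^ (∑ i : Fin k, min (α i.castSucc) (a - 1))) :=
  psi_abelian_p_group_general p k α hmono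
end

section
/- Let p be a prime and let G = Z_{p^{α₁}} × Z_{p^{α₂}} × ⋯ × Z_{p^{α_k}} be a finite abelian p-group with 1 ≤ α₁ ≤ α₂ ≤ … ≤ α_k. Then ψ(G) = p^{2α_k + α_{k−1} + ⋯ + α₁} − (p − 1) · ∑_{α=0}^{α_k − 1} p^{2α} · f(α), where f(α) = p^{∑_{i=1}^{k−1} min(α_i, α)}. -/
open Finset

lemma card_nsmul_eq_zero_zmod_aux (d e : ℕ) (hd0 : 0 < d) (he0 : 0 < e) :
    Nat.card {x : ZMod (d * e) // d • x = 0} = d := by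
  haveI : NeZero (d * e) := ⟨(Nat.mul_pos hd0 he0).ne'⟩
  haveI : NeZero e := ⟨he0.ne'⟩
  have hedvd : e ∣ d * e := ⟨d, mul_comm d e⟩
  set f : ZMod (d * e) →+ ZMod e := (ZMod.castHom hedvd (ZMod e)).toAddMonoidHom with hf
  have hker : ∀ x : ZMod (d * e), d • x = 0 ↔ x ∈ f.ker := by
    intro x
    rw [AddMonoidHom.mem_ker]
    have hx : ((x.val : ℕ) : ZMod (d * e)) = x := ZMod.natCast_zmod_val x
    have h1 : f x = ((x.val : ℕ) : ZMod e) := by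
      rw [hf]
      simp only [RingHom.toAddMonoidHom_eq_coe, AddMonoidHom.coe_coe, ZMod.castHom_apply]
      rw [← ZMod.natCast_val]
    have h2 : d • x = ((d * x.val : ℕ) : ZMod (d * e)) := by
      rw [nsmul_eq_mul]
      conv_lhs => rw [← hx]
      rw [← Nat.cast_mul]
    rw [h1, h2, ZMod.natCast_eq_zero_iff, ZMod.natCast_eq_zero_iff,
      Nat.mul_dvd_mul_iff_left hd0]
  have hsurj : Function.Surjective f := by
    intro y
    obtain ⟨m, rfl⟩ := ZMod.natCast_zmod_surjective y
    exact ⟨(m : ZMod (d * e)), by simp [hf]⟩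
  have h1 : Nat.card (ZMod (d * e)) = Nat.card (ZMod (d * e) ⧸ f.ker) * Nat.card f.ker :=
    AddSubgroup.card_eq_card_quotient_mul_card_addSubgroup f.ker
  have h2 : Nat.card (ZMod (d * e) ⧸ f.ker) = e := by
    rw [Nat.card_congr (QuotientAddGroup.quotientKerEquivOfSurjective f hsurj).toEquiv,
      Nat.card_zmod]
  have h3 : Nat.card {x : ZMod (d * e) // d • x = 0} = Nat.card f.ker :=
    Nat.card_congr (Equiv.subtypeEquivRight hker)
  rw [h3]
  rw [Nat.card_zmod, h2] at h1
  exact (Nat.eq_of_mul_eq_mul_left he0 (by rw [← h1, mul_comm])).symm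

lemma card_nsmul_eq_zero_zmod (n d : ℕ) (hn : 0 < n) (hd : d ∣ n) :
    Nat.card {x : ZMod n // d • x = 0} = d := by
  obtain ⟨e, he⟩ := hd
  have hd0 : 0 < d := Nat.pos_of_mul_pos_left (a := e) (by rwa [mul_comm, ← he])
  have he0 : 0 < e := Nat.pos_of_mul_pos_left (a := d) (by rwa [← he])
  subst he
  exact card_nsmul_eq_zero_zmod_aux d e hd0 he0

lemma card_nsmul_eq_zero_zmod_pow (p : ℕ) (hp : p.Prime) (β a : ℕ) :
    Nat.card {x : ZMod (p ^ β) // (p ^ a) • x = 0} = p ^ min β a := by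
  haveI : NeZero (p ^ β) := ⟨(pow_pos hp.pos β).ne'⟩
  have key : ∀ x : ZMod (p ^ β), (p ^ a) • x = 0 ↔ (p ^ min β a) • x = 0 := by
    intro x
    rw [← addOrderOf_dvd_iff_nsmul_eq_zero, ← addOrderOf_dvd_iff_nsmul_eq_zero]
    constructor
    · intro h
      have hcard : addOrderOf x ∣ p ^ β := by
        have := addOrderOf_dvd_card (x := x)
        rwa [ZMod.card] at this
      obtain ⟨c, hc, hxc⟩ := (Nat.dvd_prime_pow hp).1 hcard
      rw [hxc] at h ⊢
      have hca : c ≤ a := (Nat.pow_dvd_pow_iff_le_right hp.one_lt).1 h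
      exact pow_dvd_pow p (le_min hc hca)
    · intro h
      exact h.trans (pow_dvd_pow p (min_le_right _ _))
  rw [Nat.card_congr (Equiv.subtypeEquivRight key)]
  exact card_nsmul_eq_zero_zmod _ _ (pow_pos hp.pos _) (pow_dvd_pow p (min_le_left _ _))

lemma card_pow_eq_one_mult (p : ℕ) (hp : p.Prime) (β a : ℕ) :
    Nat.card {y : Multiplicative (ZMod (p ^ β)) // y ^ (p ^ a) = 1} = p ^ min β a := by
  rw [← card_nsmul_eq_zero_zmod_pow p hp β a]
  apply Nat.card_congr
  refine Equiv.subtypeEquiv Multiplicative.toAdd (fun y => ?_)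
  constructor
  · intro h
    have := congrArg Multiplicative.toAdd h
    simpa using this
  · intro h
    have : Multiplicative.toAdd (y ^ p ^ a) = Multiplicative.toAdd (1 : Multiplicative (ZMod (p ^ β))) := by
      simpa using h
    exact Multiplicative.toAdd.injective this

open Finset

theorem psi_abelian_p_group_alt (p : ℕ) [Fact p.Prime] (k : ℕ) (α : Fin (k + 1) → ℕ)
    (h1 : ∀ i, 1 ≤ α i) (hmono : Monotone α) :
    (psi (∀ i, Multiplicative (ZMod (p ^ α i))) : ℤ) =
      (p : ℤ) ^ (2 * α (Fin.last k) + ∑ i : Fin k, α i.castSucc)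
        - ((p : ℤ) - 1) * ∑ a ∈ Finset.range (α (Fin.last k)),
            (p : ℤ) ^ (2 * a) * (p : ℤ) ^ (∑ i : Fin k, min (α i.castSucc) a) := by
  classical
  have hp := (Fact.out : p.Prime)
  set m := α (Fin.last k) with hm
  set G := ∀ i, Multiplicative (ZMod (p ^ α i)) with hG
  haveI : ∀ i, NeZero (p ^ α i) := fun i => ⟨(pow_pos hp.pos _).ne'⟩
  have hαle : ∀ i, α i ≤ m := fun i => hmono (Fin.le_last i)
  have hcards : ∀ i, Fintype.card (Multiplicative (ZMod (p ^ α i))) = p ^ α i := fun i => by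
    rw [Fintype.card_multiplicative, ZMod.card]
  have hord : ∀ x : G, orderOf x ∣ p ^ m := by
    intro x
    rw [orderOf_dvd_iff_pow_eq_one]
    funext i
    have h := orderOf_dvd_card (x := x i)
    rw [hcards i] at h
    have hdm : orderOf (x i) ∣ p ^ m := h.trans (pow_dvd_pow p (hαle i))
    exact orderOf_dvd_iff_pow_eq_one.mp hdm
  have hN : ∀ a : ℕ, ((univ.filter fun x : G => x ^ p ^ a = 1).card
      = p ^ (min m a + ∑ i : Fin k, min (α i.castSucc) a)) := by
    intro a
    rw [← Fintype.card_subtype]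
    have e1 : {x : G // x ^ p ^ a = 1}
        ≃ ∀ i, {y : Multiplicative (ZMod (p ^ α i)) // y ^ p ^ a = 1} := by
      refine (Equiv.subtypeEquivRight fun x => ?_).trans (Equiv.subtypePiEquivPi)
      constructor
      · intro h i; exact congrFun h i
      · intro h; funext i; exact h i
    rw [Fintype.card_congr e1, Fintype.card_pi]
    have hc : ∀ i : Fin (k + 1),
        Fintype.card {y : Multiplicative (ZMod (p ^ α i)) // y ^ p ^ a = 1}
          = p ^ min (α i) a := by
      intro i
      rw [← Nat.card_eq_fintype_card]
      exact card_pow_eq_one_mult p hp (α i) a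
    rw [Finset.prod_congr rfl (fun i _ => hc i), Finset.prod_pow_eq_pow_sum]
    congr 1
    rw [Fin.sum_univ_castSucc, hm]
    ring
  have hcardG : Fintype.card G = p ^ (m + ∑ i : Fin k, α i.castSucc) := by
    rw [Fintype.card_pi, Finset.prod_congr rfl (fun i _ => hcards i),
      Finset.prod_pow_eq_pow_sum]
    congr 1
    rw [Fin.sum_univ_castSucc, hm]
    ring
  have hpt : ∀ x : G, (orderOf x : ℤ)
      = (p : ℤ) ^ m - ((p : ℤ) - 1) * ∑ a ∈ range m, (if x ^ p ^ a = 1 then (p : ℤ) ^ a else 0) := by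
    intro x
    obtain ⟨d, hdm, hxd⟩ := (Nat.dvd_prime_pow hp).1 (hord x)
    have hdm' : d ≤ m := by
      by_contra hlt
      push_neg at hlt
      exact absurd ((Nat.pow_dvd_pow_iff_le_right hp.one_lt).1 (hxd ▸ hord x)) (by omega)
    have hcond : ∀ a, (x ^ p ^ a = 1) ↔ d ≤ a := by
      intro a
      rw [← orderOf_dvd_iff_pow_eq_one, hxd, Nat.pow_dvd_pow_iff_le_right hp.one_lt]
    have h2 : (∑ a ∈ range m, if x ^ p ^ a = 1 then (p : ℤ) ^ a else 0)
        = ∑ a ∈ Ico d m, (p : ℤ) ^ a := by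
      rw [← Finset.sum_filter]
      congr 1
      ext b
      simp [hcond, Finset.mem_Ico, and_comm]
    have h3 : (∑ a ∈ Ico d m, (p : ℤ) ^ a) * ((p : ℤ) - 1) = (p : ℤ) ^ m - (p : ℤ) ^ d :=
      geom_sum_Ico_mul _ hdm'
    rw [h2, hxd]
    push_cast
    linear_combination h3
  rw [psi]
  push_cast
  rw [Finset.sum_congr rfl (fun x _ => hpt x), Finset.sum_sub_distrib,
    Finset.sum_const, Finset.card_univ, hcardG, ← Finset.mul_sum, Finset.sum_comm]
  have h4 : ∀ a ∈ range m, (∑ x : G, if x ^ p ^ a = 1 then (p : ℤ) ^ a else 0)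
      = (p : ℤ) ^ (2 * a) * (p : ℤ) ^ (∑ i : Fin k, min (α i.castSucc) a) := by
    intro a ha
    rw [← Finset.sum_filter, Finset.sum_const, hN a, nsmul_eq_mul,
      min_eq_right (le_of_lt (Finset.mem_range.1 ha))]
    push_cast [pow_add]
    ring
  rw [Finset.sum_congr rfl h4]
  have h5 : (p ^ (m + ∑ i : Fin k, α i.castSucc)) • ((p : ℤ) ^ m)
      = (p : ℤ) ^ (2 * m + ∑ i : Fin k, α i.castSucc) := by
    rw [nsmul_eq_mul]
    push_cast
    rw [← pow_add]
    congr 1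
    ring
  rw [h5]
end

section
/- Let p be a prime and n a positive integer. Then ψ(Z_{p^n}) = (p^{2n+1} + 1) / (p + 1), where Z_{p^n} is the cyclic group of order p^n; equivalently, (p + 1) · ψ(Z_{p^n}) = p^{2n+1} + 1. -/
lemma psi_cyclic (G : Type*) [Group G] [Fintype G] [IsCyclic G] :
    psi G = ∑ d ∈ (Fintype.card G).divisors, d.totient * d := by
  classical
  unfold psi
  rw [← Finset.sum_fiberwise_of_maps_to' (g := orderOf)
    (fun a _ => Nat.mem_divisors.mpr ⟨orderOf_dvd_card, Fintype.card_ne_zero⟩) (fun d => d)]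
  refine Finset.sum_congr rfl fun d hd => ?_
  rw [Finset.sum_const, smul_eq_mul,
    IsCyclic.card_orderOf_eq_totient (Nat.mem_divisors.mp hd).1]

lemma key (p : ℕ) (hp : p.Prime) (n : ℕ) :
    (p + 1) * ∑ i ∈ Finset.range (n + 1), (p ^ i).totient * p ^ i = p ^ (2 * n + 1) + 1 := by
  obtain ⟨q, rfl⟩ : ∃ q, p = q + 1 := ⟨p - 1, (Nat.succ_pred_eq_of_pos hp.pos).symm⟩
  induction n with
  | zero => simp
  | succ n ih =>
    rw [Finset.sum_range_succ, mul_add, ih, Nat.totient_prime_pow hp (Nat.succ_pos n)]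
    simp only [Nat.succ_sub_one, Nat.add_sub_cancel]
    ring

theorem psi_cyclic_p_pow (p n : ℕ) [Fact p.Prime] (hn : 0 < n) :
    (p + 1) * psi (Multiplicative (ZMod (p ^ n))) = p ^ (2 * n + 1) + 1 := by
  have hp := Fact.out (p := p.Prime)
  have : NeZero (p ^ n) := ⟨pow_ne_zero n hp.ne_zero⟩
  rw [psi_cyclic]
  have hcard : Fintype.card (Multiplicative (ZMod (p ^ n))) = p ^ n := by
    simp [ZMod.card]
  rw [hcard, Nat.sum_divisors_prime_pow hp, key p hp n]
end

section
/- Let p be a prime and n ≥ 2 an integer. Then ψ(Z_{p²} × Z_p^{n−2}) = p^{n+2} − p^{n+1} + p^n − p + 1, where Z_{p²} × Z_p^{n−2} is the direct product of the cyclic group of order p² with n − 2 copies of the cyclic group of order p. -/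
open Finset

lemma sum_orderOf_comp (p : ℕ) [hp : Fact p.Prime] (g : ℕ → ℕ) :
    ∑ a : Multiplicative (ZMod (p ^ 2)), g (orderOf a)
      = g 1 + (p - 1) * g p + (p ^ 2 - p) * g (p ^ 2) := by
  haveI : NeZero (p ^ 2) := ⟨pow_ne_zero 2 hp.out.ne_zero⟩
  have hcard : Fintype.card (Multiplicative (ZMod (p ^ 2))) = p ^ 2 := by
    simp [ZMod.card]
  have hmaps : ∀ a ∈ (univ : Finset (Multiplicative (ZMod (p ^ 2)))),
      orderOf a ∈ (p ^ 2).divisors := by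
    intro a _
    rw [Nat.mem_divisors]
    refine ⟨?_, pow_ne_zero 2 hp.out.ne_zero⟩
    have h : orderOf a ∣ Fintype.card (Multiplicative (ZMod (p ^ 2))) := orderOf_dvd_card
    rwa [hcard] at h
  rw [← Finset.sum_fiberwise_of_maps_to hmaps (fun a => g (orderOf a))]
  have hfiber : ∀ d ∈ (p ^ 2).divisors,
      ∑ a ∈ univ.filter (fun a : Multiplicative (ZMod (p ^ 2)) => orderOf a = d),
        g (orderOf a) = d.totient * g d := by
    intro d hd
    rw [Nat.mem_divisors] at hd
    have hd' : d ∣ Fintype.card (Multiplicative (ZMod (p ^ 2))) := by rw [hcard]; exact hd.1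
    have := IsCyclic.card_orderOf_eq_totient (α := Multiplicative (ZMod (p ^ 2))) hd'
    calc ∑ a ∈ univ.filter (fun a : Multiplicative (ZMod (p ^ 2)) => orderOf a = d),
          g (orderOf a)
        = ∑ a ∈ univ.filter (fun a : Multiplicative (ZMod (p ^ 2)) => orderOf a = d), g d := by
          apply Finset.sum_congr rfl
          intro a ha
          rw [Finset.mem_filter] at ha
          rw [ha.2]
      _ = _ := by rw [Finset.sum_const, this, smul_eq_mul]
  rw [Finset.sum_congr rfl hfiber, Nat.sum_divisors_prime_pow hp.out]
  rw [Finset.sum_range_succ, Finset.sum_range_succ, Finset.sum_range_one]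
  have h0 : Nat.totient (p ^ 0) = 1 := by simp
  have h1 : Nat.totient (p ^ 1) = p - 1 := by simp [Nat.totient_prime hp.out]
  have h2 : Nat.totient (p ^ 2) = p ^ 2 - p := by
    rw [Nat.totient_prime_pow hp.out (by norm_num)]
    have : p ^ (2 - 1) * (p - 1) = p * p - p * 1 := by
      rw [← Nat.mul_sub]; norm_num
    rw [this, mul_one, ← sq]
  rw [h0, h1, h2, pow_zero, pow_one, one_mul]

lemma orderOf_pi_eq (p m : ℕ) [hp : Fact p.Prime]
    (f : Fin m → Multiplicative (ZMod p)) (hf : f ≠ 1) : orderOf f = p := by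
  have hpow : f ^ p = 1 := by
    funext i
    show (f i) ^ p = 1
    have := pow_card_eq_one (G := Multiplicative (ZMod p)) (x := f i)
    rwa [Fintype.card_multiplicative, ZMod.card] at this
  have hdvd : orderOf f ∣ p := orderOf_dvd_of_pow_eq_one hpow
  rcases (Nat.Prime.eq_one_or_self_of_dvd hp.out _ hdvd) with h | h
  · exact absurd (orderOf_eq_one_iff.mp h) hf
  · exact h

lemma arith (p m : ℕ) (hp : 2 ≤ p) :
    1 + (p ^ m - 1) * p + (p - 1) * (p + (p ^ m - 1) * p)
      + (p ^ 2 - p) * (p ^ 2 + (p ^ m - 1) * p ^ 2)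
      = p ^ (m + 4) - p ^ (m + 3) + p ^ (m + 2) - p + 1 := by
  obtain ⟨s, rfl⟩ : ∃ s, p = s + 1 := ⟨p - 1, by omega⟩
  obtain ⟨q, hq⟩ : ∃ q, (s + 1) ^ m = q + 1 :=
    ⟨(s + 1) ^ m - 1, by have := Nat.one_le_pow m (s + 1) (by omega); omega⟩
  have h4 : (s + 1) ^ (m + 3) ≤ (s + 1) ^ (m + 4) :=
    Nat.pow_le_pow_right (by omega) (by omega)
  have h5 : s + 1 ≤ (s + 1) ^ (m + 2) :=
    Nat.le_self_pow (n := m + 2) (by omega) (s + 1)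
  have hrhs : (s + 1) ^ (m + 4) - (s + 1) ^ (m + 3) + (s + 1) ^ (m + 2) - (s + 1) + 1
      = ((s + 1) ^ (m + 4) + (s + 1) ^ (m + 2) + 1) - ((s + 1) ^ (m + 3) + (s + 1)) := by
    omega
  have hle : (s + 1) ^ (m + 3) + (s + 1)
      ≤ (s + 1) ^ (m + 4) + (s + 1) ^ (m + 2) + 1 :=
    (Nat.add_le_add h4 h5).trans (Nat.le_succ _)
  rw [hrhs]
  symm
  rw [Nat.sub_eq_iff_eq_add hle]
  have hsub1 : s + 1 - 1 = s := by omega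
  have hsub2 : (s + 1) ^ 2 - (s + 1) = s * (s + 1) := by
    rw [sq, Nat.succ_mul, Nat.add_sub_cancel]
  rw [hsub1, hsub2, hq,
    show (s + 1) ^ (m + 4) = (s + 1) ^ m * (s + 1) ^ 4 from pow_add _ _ _,
    show (s + 1) ^ (m + 3) = (s + 1) ^ m * (s + 1) ^ 3 from pow_add _ _ _,
    show (s + 1) ^ (m + 2) = (s + 1) ^ m * (s + 1) ^ 2 from pow_add _ _ _, hq]
  simp only [Nat.add_sub_cancel]
  ring

theorem psi_p_sq_times_elementary (p n : ℕ) [Fact p.Prime] (hn : 2 ≤ n) :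
    psi (Multiplicative (ZMod (p ^ 2)) × (Fin (n - 2) → Multiplicative (ZMod p))) =
      p ^ (n + 2) - p ^ (n + 1) + p ^ n - p + 1 := by
  obtain ⟨m, rfl⟩ : ∃ m, n = m + 2 := ⟨n - 2, by omega⟩
  have hp2 : 2 ≤ p := (Fact.out (p := p.Prime)).two_le
  show psi (Multiplicative (ZMod (p ^ 2)) × (Fin m → Multiplicative (ZMod p)))
      = p ^ (m + 4) - p ^ (m + 3) + p ^ (m + 2) - p + 1
  unfold psi
  rw [Fintype.sum_prod_type]
  have hHcard : Fintype.card (Fin m → Multiplicative (ZMod p)) = p ^ m := by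
    simp [ZMod.card]
  have key : ∀ a : Multiplicative (ZMod (p ^ 2)),
      ∑ f : Fin m → Multiplicative (ZMod p), orderOf (a, f)
        = orderOf a + (p ^ m - 1) * Nat.lcm (orderOf a) p := by
    intro a
    rw [← Finset.sum_filter_add_sum_filter_not Finset.univ (· = 1)]
    have hA : ∑ f ∈ univ.filter (fun f : Fin m → Multiplicative (ZMod p) => f = 1),
        orderOf (a, f) = orderOf a := by
      rw [Finset.filter_eq']
      simp [Prod.orderOf]
    have hB : ∑ f ∈ univ.filter (fun f : Fin m → Multiplicative (ZMod p) => ¬ f = 1),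
        orderOf (a, f) = (p ^ m - 1) * Nat.lcm (orderOf a) p := by
      have : ∀ f ∈ univ.filter (fun f : Fin m → Multiplicative (ZMod p) => ¬ f = 1),
          orderOf (a, f) = Nat.lcm (orderOf a) p := by
        intro f hf
        rw [Finset.mem_filter] at hf
        rw [Prod.orderOf, orderOf_pi_eq p m f hf.2]
      rw [Finset.sum_congr rfl this, Finset.sum_const, smul_eq_mul,
        Finset.filter_not, Finset.filter_eq', if_pos (Finset.mem_univ _),
        Finset.card_sdiff_of_subset (by simp), Finset.card_univ, hHcard, Finset.card_singleton]
    rw [hA, hB]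
  rw [Finset.sum_congr rfl (fun a _ => key a),
    sum_orderOf_comp p (fun d => d + (p ^ m - 1) * Nat.lcm d p)]
  have l1 : Nat.lcm 1 p = p := Nat.lcm_one_left p
  have l2 : Nat.lcm p p = p := Nat.lcm_self p
  have l3 : Nat.lcm (p ^ 2) p = p ^ 2 := Nat.dvd_antisymm (Nat.lcm_dvd dvd_rfl (dvd_pow_self p two_ne_zero)) (Nat.dvd_lcm_left _ _)
  rw [l1, l2, l3]
  exact arith p m hp2
end

section
/- Let p be a prime and α₁ ≤ α₂ be positive integers. Then ψ(Z_{p^{α₁}} × Z_{p^{α₂}}) = ( p^{2α₂+α₁+3} + p^{2α₂+α₁+2} + p^{2α₂+α₁+1} + p^{3α₁+2} + p + 1 ) / ( (p+1)(p²+p+1) ); equivalently, (p+1)(p²+p+1) · ψ(Z_{p^{α₁}} × Z_{p^{α₂}}) = p^{2α₂+α₁+3} + p^{2α₂+α₁+2} + p^{2α₂+α₁+1} + p^{3α₁+2} + p + 1. -/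
open Finset

/-- Integer version of the totient of `p ^ i`. -/
def tt (p : ℤ) : ℕ → ℤ
  | 0 => 1
  | (i + 1) => p ^ (i + 1) - p ^ i

lemma sum_tt (p : ℤ) (n : ℕ) : ∑ i ∈ Finset.range (n + 1), tt p i = p ^ n := by
  induction n with
  | zero => simp [tt]
  | succ n ih =>
    rw [Finset.sum_range_succ, ih]
    simp only [tt]
    ring

lemma key_diag (p : ℤ) (n : ℕ) :
    (p + 1) * (p ^ 2 + p + 1) *
      ∑ i ∈ Finset.range (n + 1), tt p i * ∑ j ∈ Finset.range (n + 1), tt p j * p ^ max i j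
    = p ^ (3 * n + 3) + p ^ (3 * n + 2) + p ^ (3 * n + 1) + p ^ (3 * n + 2) + p + 1 := by
  induction n with
  | zero => simp [tt]; ring
  | succ n ih =>
    rw [Finset.sum_range_succ]
    have h1 : ∀ i ∈ Finset.range (n + 1),
        tt p i * ∑ j ∈ Finset.range (n + 1 + 1), tt p j * p ^ max i j
        = tt p i * ∑ j ∈ Finset.range (n + 1), tt p j * p ^ max i j
          + tt p i * (tt p (n + 1) * p ^ (n + 1)) := by
      intro i hi
      have : i ≤ n + 1 := by have := Finset.mem_range.1 hi; omega
      rw [Finset.sum_range_succ, max_eq_right this, mul_add]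
    have h2 : ∑ j ∈ Finset.range (n + 1 + 1), tt p j * p ^ max (n + 1) j
        = (∑ j ∈ Finset.range (n + 1 + 1), tt p j) * p ^ (n + 1) := by
      rw [Finset.sum_mul]
      refine Finset.sum_congr rfl fun j hj => ?_
      have : j ≤ n + 1 := by have := Finset.mem_range.1 hj; omega
      rw [max_eq_left this]
    rw [Finset.sum_congr rfl h1, Finset.sum_add_distrib, ← Finset.sum_mul, sum_tt, h2, sum_tt]
    have htt : tt p (n + 1) = p ^ (n + 1) - p ^ n := rfl
    rw [htt]
    linear_combination ih

lemma key_s7 (p : ℤ) (α₁ α₂ : ℕ) (h : α₁ ≤ α₂) :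
    (p + 1) * (p ^ 2 + p + 1) *
      ∑ i ∈ Finset.range (α₁ + 1), tt p i * ∑ j ∈ Finset.range (α₂ + 1), tt p j * p ^ max i j
    = p ^ (2 * α₂ + α₁ + 3) + p ^ (2 * α₂ + α₁ + 2) + p ^ (2 * α₂ + α₁ + 1)
      + p ^ (3 * α₁ + 2) + p + 1 := by
  induction α₂, h using Nat.le_induction with
  | base =>
    rw [key_diag p α₁, show 2 * α₁ + α₁ + 3 = 3 * α₁ + 3 by ring,
      show 2 * α₁ + α₁ + 2 = 3 * α₁ + 2 by ring, show 2 * α₁ + α₁ + 1 = 3 * α₁ + 1 by ring]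
  | succ m hm ih =>
    have h1 : ∀ i ∈ Finset.range (α₁ + 1),
        tt p i * ∑ j ∈ Finset.range (m + 1 + 1), tt p j * p ^ max i j
        = tt p i * ∑ j ∈ Finset.range (m + 1), tt p j * p ^ max i j
          + tt p i * (tt p (m + 1) * p ^ (m + 1)) := by
      intro i hi
      have : i ≤ m + 1 := by have := Finset.mem_range.1 hi; omega
      rw [Finset.sum_range_succ, max_eq_right this, mul_add]
    rw [Finset.sum_congr rfl h1, Finset.sum_add_distrib, ← Finset.sum_mul, sum_tt]
    have htt : tt p (m + 1) = p ^ (m + 1) - p ^ m := rfl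
    rw [htt]
    linear_combination ih

lemma cast_totient {p : ℕ} (hp : p.Prime) (i : ℕ) :
    ((p ^ i).totient : ℤ) = tt (p : ℤ) i := by
  cases i with
  | zero => simp [tt]
  | succ i =>
    rw [Nat.totient_prime_pow hp (Nat.succ_pos i)]
    simp only [tt]
    push_cast [Nat.succ_sub_one, hp.one_le]
    ring

lemma sum_f_orderOf {G : Type*} [Group G] [Fintype G] [IsCyclic G] {p : ℕ} [Fact p.Prime]
    {α : ℕ} (hc : Fintype.card G = p ^ α) (f : ℕ → ℕ) :
    ∑ a : G, f (orderOf a) = ∑ i ∈ Finset.range (α + 1), (p ^ i).totient * f (p ^ i) := by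
  classical
  have hp : p.Prime := Fact.out
  have key_s7 : ∀ a : G, ∃ i ≤ α, orderOf a = p ^ i := by
    intro a
    have h := orderOf_dvd_card (x := a)
    rw [hc] at h
    obtain ⟨i, hi, he⟩ := (Nat.dvd_prime_pow hp).1 h
    exact ⟨i, hi, he⟩
  have hmap : ∀ a : G, a ∈ Finset.univ →
      padicValNat p (orderOf a) ∈ Finset.range (α + 1) := by
    intro a _
    obtain ⟨i, hi, he⟩ := key_s7 a
    rw [he, padicValNat.prime_pow]
    exact Finset.mem_range.2 (Nat.lt_succ_of_le hi)
  rw [← Finset.sum_fiberwise_of_maps_to hmap]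
  refine Finset.sum_congr rfl fun i hi => ?_
  have hfilter : (Finset.univ.filter fun a : G => padicValNat p (orderOf a) = i)
      = Finset.univ.filter fun a : G => orderOf a = p ^ i := by
    refine Finset.filter_congr fun a _ => ?_
    constructor
    · intro h
      obtain ⟨k, hk, he⟩ := key_s7 a
      rw [he] at h ⊢
      rw [padicValNat.prime_pow] at h
      rw [h]
    · intro h
      rw [h, padicValNat.prime_pow]
  rw [hfilter]
  rw [Finset.sum_congr rfl (fun a ha => by rw [(Finset.mem_filter.1 ha).2] :
    ∀ a ∈ Finset.univ.filter fun a : G => orderOf a = p ^ i, f (orderOf a) = f (p ^ i))]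
  rw [Finset.sum_const, smul_eq_mul]
  congr 1
  have : (p ^ i : ℕ) ∣ Fintype.card G := by
    rw [hc]
    exact pow_dvd_pow p (by have := Finset.mem_range.1 hi; omega)
  exact IsCyclic.card_orderOf_eq_totient this

lemma lcm_pow_pow {p : ℕ} (i j : ℕ) : Nat.lcm (p ^ i) (p ^ j) = p ^ max i j := by
  rcases le_total i j with h | h
  · rw [max_eq_right h]
    exact Nat.dvd_antisymm (Nat.lcm_dvd (pow_dvd_pow p h) dvd_rfl) (Nat.dvd_lcm_right _ _)
  · rw [max_eq_left h]
    exact Nat.dvd_antisymm (Nat.lcm_dvd dvd_rfl (pow_dvd_pow p h)) (Nat.dvd_lcm_left _ _)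

theorem psi_rank_two (p α₁ α₂ : ℕ) [Fact p.Prime] (h1 : 1 ≤ α₁) (h12 : α₁ ≤ α₂) :
    (p + 1) * (p ^ 2 + p + 1) *
        psi (Multiplicative (ZMod (p ^ α₁)) × Multiplicative (ZMod (p ^ α₂))) =
      p ^ (2 * α₂ + α₁ + 3) + p ^ (2 * α₂ + α₁ + 2) + p ^ (2 * α₂ + α₁ + 1)
        + p ^ (3 * α₁ + 2) + p + 1 := by
  have hp : p.Prime := Fact.out
  haveI : NeZero (p ^ α₁) := ⟨pow_ne_zero _ hp.ne_zero⟩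
  haveI : NeZero (p ^ α₂) := ⟨pow_ne_zero _ hp.ne_zero⟩
  have hc1 : Fintype.card (Multiplicative (ZMod (p ^ α₁))) = p ^ α₁ := by
    rw [Fintype.card_multiplicative, ZMod.card]
  have hc2 : Fintype.card (Multiplicative (ZMod (p ^ α₂))) = p ^ α₂ := by
    rw [Fintype.card_multiplicative, ZMod.card]
  have hpsi : psi (Multiplicative (ZMod (p ^ α₁)) × Multiplicative (ZMod (p ^ α₂)))
      = ∑ i ∈ Finset.range (α₁ + 1), (p ^ i).totient *
          ∑ j ∈ Finset.range (α₂ + 1), (p ^ j).totient * p ^ max i j := by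
    unfold psi
    rw [Fintype.sum_prod_type]
    simp_rw [Prod.orderOf]
    rw [sum_f_orderOf hc1 (fun d => ∑ b : Multiplicative (ZMod (p ^ α₂)), d.lcm (orderOf b))]
    refine Finset.sum_congr rfl fun i hi => ?_
    congr 1
    rw [sum_f_orderOf hc2 (fun d => (p ^ i).lcm d)]
    refine Finset.sum_congr rfl fun j hj => ?_
    rw [lcm_pow_pow]
  rw [hpsi]
  have hInt := key_s7 (p : ℤ) α₁ α₂ h12
  simp_rw [← cast_totient hp] at hInt
  exact_mod_cast hInt
end

section
/- Let p be a prime and α₁ ≤ α₂ ≤ α₃ be positive integers. Then ψ(Z_{p^{α₁}} × Z_{p^{α₂}} × Z_{p^{α₃}}) = ( p^{2α₃+α₂+α₁+1} + p^{3α₂+α₁+2} )/(p+1) − ( p^{3α₂+α₁+3} − p^{4α₁+3} )/(p²+p+1) − ( p^{4α₁+4} − 1 )/(p³+p²+p+1), where each displayed fraction is an integer (each denominator divides the corresponding numerator). -/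
/-!
An element of order `p ^ v` in a monoid of exponent dividing `p ^ n` has order
`p ^ n - ∑_{v ≤ k < n} (p ^ (k + 1) - p ^ k)`, so summing over the monoid gives
`ψ(G) = p ^ n |G| - ∑_{k < n} (p ^ (k + 1) - p ^ k) |Ω_k|`, where `Ω_k` is the `p ^ k`-torsion.
For `Z_{p^α₁} × Z_{p^α₂} × Z_{p^α₃}` one has `|Ω_k| = p ^ (min α₁ k + min α₂ k + min α₃ k)`;
splitting the sum at `α₁` and `α₂` leaves three geometric series with ratios `p ^ 4`, `p ^ 3`,
`p ^ 2`, which produce the denominators `p ^ 3 + p ^ 2 + p + 1`, `p ^ 2 + p + 1` and `p + 1`.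
-/

open Finset

section PrimePowerExponent

variable {G : Type*} [Monoid G] [DecidableEq G] {p n : ℕ}

theorem orderOf_eq_pow_sub_sum_of_pow_eq_one (hp : p.Prime) {a : G} (ha : a ^ p ^ n = 1) :
    (orderOf a : ℤ) =
      p ^ n - ∑ k ∈ range n, if a ^ p ^ k = 1 then (p : ℤ) ^ (k + 1) - p ^ k else 0 := by
  obtain ⟨v, hvn, hv⟩ := (Nat.dvd_prime_pow hp).mp (orderOf_dvd_of_pow_eq_one ha)
  have hkill : ∀ k, a ^ p ^ k = 1 ↔ v ≤ k := fun k => by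
    rw [← orderOf_dvd_iff_pow_eq_one, hv, Nat.pow_dvd_pow_iff_le_right hp.one_lt]
  have hfilter : {k ∈ range n | a ^ p ^ k = 1} = Ico v n := by
    ext k
    simp only [mem_filter, mem_range, mem_Ico, hkill]
    omega
  rw [← sum_filter, hfilter, sum_Ico_sub (fun k => (p : ℤ) ^ k) hvn, hv]
  push_cast
  ring

variable [Fintype G]

theorem psi_eq_of_pow_eq_one (hp : p.Prime) (hG : ∀ a : G, a ^ p ^ n = 1) :
    (psi G : ℤ) = p ^ n * Fintype.card G -
      ∑ k ∈ range n, ((p : ℤ) ^ (k + 1) - p ^ k) * #{a : G | a ^ p ^ k = 1} := by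
  rw [psi, Nat.cast_sum, sum_congr rfl fun a _ => orderOf_eq_pow_sub_sum_of_pow_eq_one hp (hG a),
    sum_sub_distrib, sum_const, card_univ, nsmul_eq_mul, sum_comm, mul_comm]
  congr 1
  refine sum_congr rfl fun k _ => ?_
  rw [← sum_filter, sum_const, nsmul_eq_mul, mul_comm]

end PrimePowerExponent

theorem card_filter_pow_eq_one_prod {A B : Type*} [Monoid A] [Monoid B] [Fintype A] [Fintype B]
    [DecidableEq A] [DecidableEq B] (d : ℕ) :
    #{x : A × B | x ^ d = 1} = #{a : A | a ^ d = 1} * #{b : B | b ^ d = 1} := by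
  rw [← card_product, ← filter_product, ← univ_product_univ]
  simp only [Prod.ext_iff, Prod.pow_fst, Prod.pow_snd, Prod.fst_one, Prod.snd_one]

theorem IsCyclic.card_filter_pow_eq_one {G : Type*} [CommGroup G] [IsCyclic G] [Fintype G]
    [DecidableEq G] (d : ℕ) : #{a : G | a ^ d = 1} = (Fintype.card G).gcd d := by
  rw [← Nat.card_eq_fintype_card, ← IsCyclic.card_powMonoidHom_ker, Nat.card_eq_fintype_card,
    ← Fintype.card_subtype]
  simp [MonoidHom.mem_ker]

theorem card_filter_pow_eq_one_zmod_prime_pow (p : ℕ) [Fact p.Prime] (α k : ℕ) :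
    #{x : Multiplicative (ZMod (p ^ α)) | x ^ p ^ k = 1} = p ^ min α k := by
  rw [IsCyclic.card_filter_pow_eq_one]
  simp only [Fintype.card_multiplicative, ZMod.card]
  rcases le_total α k with h | h
  · rw [min_eq_left h, Nat.gcd_eq_left (pow_dvd_pow p h)]
  · rw [min_eq_right h, Nat.gcd_eq_right (pow_dvd_pow p h)]

theorem card_filter_pow_eq_one_zmod_prime_pow_prod_three (p : ℕ) [Fact p.Prime] (a b c k : ℕ) :
    #{x : Multiplicative (ZMod (p ^ a)) × Multiplicative (ZMod (p ^ b)) ×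
        Multiplicative (ZMod (p ^ c)) | x ^ p ^ k = 1} = p ^ (min a k + min b k + min c k) := by
  simp only [card_filter_pow_eq_one_prod, card_filter_pow_eq_one_zmod_prime_pow, pow_add, mul_assoc]

theorem psi_zmod_prime_pow_prod_three (p : ℕ) [Fact p.Prime] {a b c : ℕ} (hac : a ≤ c)
    (hbc : b ≤ c) :
    (psi (Multiplicative (ZMod (p ^ a)) × Multiplicative (ZMod (p ^ b)) ×
        Multiplicative (ZMod (p ^ c))) : ℤ) =
      (p : ℤ) ^ (a + b + 2 * c) - (p - 1) * ∑ k ∈ range c, (p : ℤ) ^ (2 * k + min a k + min b k) := by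
  have hcard : Fintype.card (Multiplicative (ZMod (p ^ a)) × Multiplicative (ZMod (p ^ b)) ×
      Multiplicative (ZMod (p ^ c))) = p ^ (a + b + c) := by
    simp only [Fintype.card_prod, Fintype.card_multiplicative, ZMod.card, pow_add, mul_assoc]
  -- The `p ^ c`-torsion subgroup already has `|G|` elements.
  have hexp : ∀ x : Multiplicative (ZMod (p ^ a)) × Multiplicative (ZMod (p ^ b)) ×
      Multiplicative (ZMod (p ^ c)), x ^ p ^ c = 1 := by
    intro x
    refine (card_filter_eq_iff (p := fun y => y ^ p ^ c = 1)).mp ?_ x (mem_univ x)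
    rw [card_filter_pow_eq_one_zmod_prime_pow_prod_three, card_univ, hcard, min_eq_left hac,
      min_eq_left hbc, min_self]
  rw [psi_eq_of_pow_eq_one Fact.out hexp, hcard, mul_sum]
  push_cast
  rw [← pow_add, show c + (a + b + c) = a + b + 2 * c by ring]
  congr 1
  refine sum_congr rfl fun k hk => ?_
  rw [card_filter_pow_eq_one_zmod_prime_pow_prod_three, min_eq_right (mem_range.mp hk).le]
  push_cast
  ring

theorem sum_range_pow_two_mul_add_min_add_min {R : Type*} [CommSemiring R] (x : R) {a b c : ℕ}
    (hab : a ≤ b) (hbc : b ≤ c) :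
    ∑ k ∈ range c, x ^ (2 * k + min a k + min b k) =
      ∑ k ∈ range a, (x ^ 4) ^ k + x ^ (4 * a) * ∑ k ∈ range (b - a), (x ^ 3) ^ k +
        x ^ (a + 3 * b) * ∑ k ∈ range (c - b), (x ^ 2) ^ k := by
  obtain ⟨m, rfl⟩ := Nat.exists_eq_add_of_le hab
  obtain ⟨n, rfl⟩ := Nat.exists_eq_add_of_le hbc
  simp only [Nat.add_sub_cancel_left, sum_range_add, mul_sum]
  congr 1
  · congr 1
    · refine sum_congr rfl fun k hk => ?_
      have hka := (mem_range.mp hk).le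
      rw [min_eq_right hka, min_eq_right (hka.trans (Nat.le_add_right a m)), ← pow_mul]
      ring_nf
    · refine sum_congr rfl fun k hk => ?_
      rw [min_eq_left (Nat.le_add_right a k),
        min_eq_right (Nat.add_le_add_left (mem_range.mp hk).le a), ← pow_mul, ← pow_add]
      ring_nf
  · refine sum_congr rfl fun k _ => ?_
    rw [min_eq_left (by omega), min_eq_left (Nat.le_add_right (a + m) k), ← pow_mul, ← pow_add]
    ring_nf

theorem rank_three_closed_form (x : ℤ) (hx : 0 ≤ x) {a b c : ℕ} (hab : a ≤ b) (hbc : b ≤ c) :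
    (x + 1 ∣ x ^ (2 * c + b + a + 1) + x ^ (3 * b + a + 2)) ∧
    (x ^ 2 + x + 1 ∣ x ^ (3 * b + a + 3) - x ^ (4 * a + 3)) ∧
    (x ^ 3 + x ^ 2 + x + 1 ∣ x ^ (4 * a + 4) - 1) ∧
    x ^ (a + b + 2 * c) - (x - 1) * (∑ k ∈ range a, (x ^ 4) ^ k +
        x ^ (4 * a) * ∑ k ∈ range (b - a), (x ^ 3) ^ k +
        x ^ (a + 3 * b) * ∑ k ∈ range (c - b), (x ^ 2) ^ k) =
      (x ^ (2 * c + b + a + 1) + x ^ (3 * b + a + 2)) / (x + 1)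
        - (x ^ (3 * b + a + 3) - x ^ (4 * a + 3)) / (x ^ 2 + x + 1)
        - (x ^ (4 * a + 4) - 1) / (x ^ 3 + x ^ 2 + x + 1) := by
  obtain ⟨m, rfl⟩ := Nat.exists_eq_add_of_le hab
  obtain ⟨n, rfl⟩ := Nat.exists_eq_add_of_le hbc
  simp only [Nat.add_sub_cancel_left]
  set g₄ := ∑ k ∈ range a, (x ^ 4) ^ k
  set g₃ := ∑ k ∈ range m, (x ^ 3) ^ k
  set g₂ := ∑ k ∈ range n, (x ^ 2) ^ k
  have h₄ : g₄ * (x ^ 4 - 1) = x ^ (4 * a) - 1 := by rw [geom_sum_mul, pow_mul]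
  have h₃ : g₃ * (x ^ 3 - 1) = x ^ (3 * m) - 1 := by rw [geom_sum_mul, pow_mul]
  have h₂ : g₂ * (x ^ 2 - 1) = x ^ (2 * n) - 1 := by rw [geom_sum_mul, pow_mul]
  have e₁ : x ^ (2 * (a + m + n) + (a + m) + a + 1) + x ^ (3 * (a + m) + a + 2) =
      (x + 1) * (x ^ (4 * a + 3 * m + 1) * ((x - 1) * g₂ + 1)) := by
    linear_combination (-x ^ (4 * a + 3 * m + 1)) * h₂
  have e₂ : x ^ (3 * (a + m) + a + 3) - x ^ (4 * a + 3) =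
      (x ^ 2 + x + 1) * (x ^ (4 * a + 3) * (x - 1) * g₃) := by
    linear_combination (-x ^ (4 * a + 3)) * h₃
  have e₃ : x ^ (4 * a + 4) - 1 = (x ^ 3 + x ^ 2 + x + 1) * ((x - 1) * (g₄ + x ^ (4 * a))) := by
    linear_combination -h₄
  refine ⟨Dvd.intro _ e₁.symm, Dvd.intro _ e₂.symm, Dvd.intro _ e₃.symm, ?_⟩
  rw [e₁, e₂, e₃, Int.mul_ediv_cancel_left _ (by positivity),
    Int.mul_ediv_cancel_left _ (by positivity), Int.mul_ediv_cancel_left _ (by positivity)]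
  linear_combination (-x ^ (4 * a + 3 * m)) * h₂ + x ^ (4 * a) * (x - 1) * h₃

theorem psi_rank_three_general (p α₁ α₂ α₃ : ℕ) [Fact p.Prime]
    (h12 : α₁ ≤ α₂) (h23 : α₂ ≤ α₃) :
    (((p : ℤ) + 1) ∣ ((p : ℤ) ^ (2 * α₃ + α₂ + α₁ + 1) + (p : ℤ) ^ (3 * α₂ + α₁ + 2))) ∧
    (((p : ℤ) ^ 2 + p + 1) ∣ ((p : ℤ) ^ (3 * α₂ + α₁ + 3) - (p : ℤ) ^ (4 * α₁ + 3))) ∧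
    (((p : ℤ) ^ 3 + p ^ 2 + p + 1) ∣ ((p : ℤ) ^ (4 * α₁ + 4) - 1)) ∧
    (psi (Multiplicative (ZMod (p ^ α₁)) × Multiplicative (ZMod (p ^ α₂))
        × Multiplicative (ZMod (p ^ α₃))) : ℤ) =
      ((p : ℤ) ^ (2 * α₃ + α₂ + α₁ + 1) + (p : ℤ) ^ (3 * α₂ + α₁ + 2)) / ((p : ℤ) + 1)
        - ((p : ℤ) ^ (3 * α₂ + α₁ + 3) - (p : ℤ) ^ (4 * α₁ + 3)) / ((p : ℤ) ^ 2 + p + 1)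
        - ((p : ℤ) ^ (4 * α₁ + 4) - 1) / ((p : ℤ) ^ 3 + p ^ 2 + p + 1) := by
  rw [psi_zmod_prime_pow_prod_three p (h12.trans h23) h23,
    sum_range_pow_two_mul_add_min_add_min (p : ℤ) h12 h23]
  exact rank_three_closed_form p (Int.natCast_nonneg p) h12 h23

theorem psi_rank_three (p α₁ α₂ α₃ : ℕ) [Fact p.Prime]
    (h1 : 1 ≤ α₁) (h12 : α₁ ≤ α₂) (h23 : α₂ ≤ α₃) :
    (((p : ℤ) + 1) ∣ ((p : ℤ) ^ (2 * α₃ + α₂ + α₁ + 1) + (p : ℤ) ^ (3 * α₂ + α₁ + 2))) ∧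
    (((p : ℤ) ^ 2 + p + 1) ∣ ((p : ℤ) ^ (3 * α₂ + α₁ + 3) - (p : ℤ) ^ (4 * α₁ + 3))) ∧
    (((p : ℤ) ^ 3 + p ^ 2 + p + 1) ∣ ((p : ℤ) ^ (4 * α₁ + 4) - 1)) ∧
    (psi (Multiplicative (ZMod (p ^ α₁)) × Multiplicative (ZMod (p ^ α₂))
        × Multiplicative (ZMod (p ^ α₃))) : ℤ) =
      ((p : ℤ) ^ (2 * α₃ + α₂ + α₁ + 1) + (p : ℤ) ^ (3 * α₂ + α₁ + 2)) / ((p : ℤ) + 1)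
        - ((p : ℤ) ^ (3 * α₂ + α₁ + 3) - (p : ℤ) ^ (4 * α₁ + 3)) / ((p : ℤ) ^ 2 + p + 1)
        - ((p : ℤ) ^ (4 * α₁ + 4) - 1) / ((p : ℤ) ^ 3 + p ^ 2 + p + 1) :=
  psi_rank_three_general p α₁ α₂ α₃ h12 h23
end

section
/- Let p be a prime and n a positive integer. Let G₁ = Z_{p^{α₁}} × ⋯ × Z_{p^{α_k}} and G₂ = Z_{p^{β₁}} × ⋯ × Z_{p^{β_r}} be abelian p-groups of order p^n, with 1 ≤ α₁ ≤ … ≤ α_k, 1 ≤ β₁ ≤ … ≤ β_r, α₁ + ⋯ + α_k = n and β₁ + ⋯ + β_r = n. Then ψ(G₁) < ψ(G₂) if and only if the n-tuple (α_k, …, α₁, 0, …, 0) (padded with n − k zeros) is strictly smaller than the n-tuple (β_r, …, β₁, 0, …, 0) (padded with n − r zeros) in the lexicographic order. -/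
/-!
In a group of order `p ^ n`, an element of order `p ^ e` satisfies
`p ^ e + (p - 1) * ∑_{e ≤ d < n} p ^ d = p ^ n`. Summing over the group gives
`ψ(G) + (p - 1) * ∑_{d < n} p ^ d * #{x | x ^ p ^ d = 1} = p ^ (2n)`, and for `G = ∏ ℤ/p^(α i)`
the count is `p ^ ∑ min (α i) d`. So `ψ(G₁) < ψ(G₂)` iff `W(β) < W(α)` for
`W(a) = colWeight p n a = ∑_{d < n} p ^ (d + ∑ min (a i) d)`, whose exponents strictly increase
with `d`.

If the descending tuples first differ at `m` with `a m < b m`, then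
`∑ min (b j) d ≤ ∑ min (a j) d` for every `d ≥ a m`, strictly at `d = a m`; the terms of `W(b)`
with `d ≤ a m` are distinct powers of `p` below `p ^ (a m + ∑ min (a j) (a m))`, so
`W(b) < W(a)`. Hence `W` is strictly antitone on partitions of `n` in lexicographic order.
-/

open Finset

/-- The `n`-tuple `(α_k, …, α₁, 0, …, 0)` (the exponents in reversed, descending order,
padded with `n - k` zeros) associated to the tuple `α = (α₁, …, α_k)`. -/
def pad {k : ℕ} (α : Fin k → ℕ) (n : ℕ) (j : Fin n) : ℕ :=
  if h : (j : ℕ) < k then α (Fin.rev ⟨j, h⟩) else 0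

theorem Pi.card_pow_eq_one {ι : Type*} [Fintype ι] [DecidableEq ι] {G : ι → Type*}
    [∀ i, Monoid (G i)] [∀ i, Fintype (G i)] [∀ i, DecidableEq (G i)] (q : ℕ) :
    #{a : ∀ i, G i | a ^ q = 1} = ∏ i, #{x : G i | x ^ q = 1} := by
  rw [← Fintype.card_piFinset]
  congr 1
  ext a
  simp [funext_iff]

theorem IsCyclic.card_pow_eq_one {G : Type*} [CommGroup G] [IsCyclic G] [Fintype G]
    [DecidableEq G] (q : ℕ) : #{x : G | x ^ q = 1} = (Fintype.card G).gcd q := by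
  rw [← Nat.card_eq_fintype_card, ← IsCyclic.card_powMonoidHom_ker, ← Fintype.card_subtype,
    ← Nat.card_eq_fintype_card]
  rfl

theorem card_pow_prime_pow_eq_one_pi_zmod (p : ℕ) [Fact p.Prime] {ι : Type*} [Fintype ι]
    [DecidableEq ι] (α : ι → ℕ) (d : ℕ) :
    #{a : ∀ i, Multiplicative (ZMod (p ^ α i)) | a ^ p ^ d = 1} = p ^ ∑ i, min (α i) d := by
  simp_rw [Pi.card_pow_eq_one, IsCyclic.card_pow_eq_one, Fintype.card_multiplicative,
    ZMod.card, Nat.gcd_pow_pow, prod_pow_eq_pow_sum]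

theorem pow_add_sub_one_mul_sum_Ico {p : ℕ} (hp : 1 ≤ p) {e n : ℕ} (h : e ≤ n) :
    p ^ e + (p - 1) * ∑ d ∈ Ico e n, p ^ d = p ^ n := by
  induction n, h using Nat.le_induction with
  | base => simp
  | succ n hen ih =>
    rw [sum_Ico_succ_top hen, mul_add, ← add_assoc, ih]
    obtain ⟨q, rfl⟩ := Nat.exists_eq_add_of_le' hp
    simp only [Nat.add_sub_cancel, pow_succ]
    ring

theorem orderOf_add_sub_one_mul_sum {G : Type*} [Group G] [Fintype G] [DecidableEq G] {p n : ℕ}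
    (hp : p.Prime) (hG : Fintype.card G = p ^ n) (a : G) :
    orderOf a + (p - 1) * ∑ d ∈ range n with a ^ p ^ d = 1, p ^ d = p ^ n := by
  obtain ⟨e, he, hae⟩ := (Nat.dvd_prime_pow hp).mp (hG ▸ orderOf_dvd_card (x := a))
  have hfilter : {d ∈ range n | a ^ p ^ d = 1} = Ico e n := by
    ext d
    rw [mem_filter, mem_range, mem_Ico, ← orderOf_dvd_iff_pow_eq_one, hae,
      Nat.pow_dvd_pow_iff_le_right hp.one_lt]
    tauto
  rw [hfilter, hae, pow_add_sub_one_mul_sum_Ico hp.one_le he]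

theorem psi_add_sub_one_mul_sum {G : Type*} [Group G] [Fintype G] [DecidableEq G] {p n : ℕ}
    (hp : p.Prime) (hG : Fintype.card G = p ^ n) :
    psi G + (p - 1) * ∑ d ∈ range n, p ^ d * #{a : G | a ^ p ^ d = 1} = p ^ n * p ^ n := by
  have h := sum_congr rfl fun a (_ : a ∈ univ) => orderOf_add_sub_one_mul_sum hp hG a
  rw [sum_add_distrib, ← mul_sum, sum_const, card_univ, hG, smul_eq_mul] at h
  rw [psi, ← h, sum_comm' (t' := range n) (s' := fun d => {a : G | a ^ p ^ d = 1})
    (by simp [and_comm])]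
  simp_rw [sum_const, smul_eq_mul, mul_comm]

def colWeight (p n : ℕ) {ι : Type*} [Fintype ι] (a : ι → ℕ) : ℕ :=
  ∑ d ∈ range n, p ^ (d + ∑ i, min (a i) d)

theorem psi_pi_zmod_add_sub_one_mul_colWeight (p : ℕ) [hp : Fact p.Prime] {n : ℕ} {ι : Type*}
    [Fintype ι] [DecidableEq ι] (α : ι → ℕ) (hα : ∑ i, α i = n) :
    psi (∀ i, Multiplicative (ZMod (p ^ α i))) + (p - 1) * colWeight p n α = p ^ n * p ^ n := by
  have hcard : Fintype.card (∀ i, Multiplicative (ZMod (p ^ α i))) = p ^ n := by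
    simp_rw [Fintype.card_pi, Fintype.card_multiplicative, ZMod.card, prod_pow_eq_pow_sum, hα]
  rw [← psi_add_sub_one_mul_sum hp.out hcard, colWeight]
  simp_rw [card_pow_prime_pow_eq_one_pi_zmod, pow_add]

theorem sum_comp_pad {M : Type*} [AddCommMonoid M] {k n : ℕ} (α : Fin k → ℕ) (hk : k ≤ n)
    (F : ℕ → M) (hF : F 0 = 0) : ∑ j, F (pad α n j) = ∑ i, F (α i) := by
  have he : Function.Injective fun i : Fin k => Fin.castLE hk i.rev :=
    (Fin.castLE_injective hk).comp Fin.rev_injective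
  refine (Fintype.sum_of_injective _ he (fun i => F (α i)) (fun j => F (pad α n j)) ?_ ?_).symm
  · intro j hj
    have hjk : ¬ (j : ℕ) < k := fun hjk => hj ⟨Fin.rev ⟨j, hjk⟩, by ext; simp⟩
    simp [pad, hjk, hF]
  · intro i
    have hik : (Fin.castLE hk i.rev : ℕ) < k := i.rev.isLt
    rw [pad, dif_pos hik]
    simp only [Fin.val_castLE, Fin.eta, Fin.rev_rev]

theorem sum_pad {k n : ℕ} {α : Fin k → ℕ} (hk : k ≤ n) : ∑ j, pad α n j = ∑ i, α i :=
  sum_comp_pad α hk id rfl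

theorem antitone_pad {k : ℕ} {α : Fin k → ℕ} (hα : Monotone α) (n : ℕ) : Antitone (pad α n) := by
  intro i j hij
  unfold pad
  split_ifs with hj hi hi
  · exact hα (Fin.rev_le_rev.mpr hij)
  · omega
  · exact Nat.zero_le _
  · exact le_rfl

theorem colWeight_pad (p : ℕ) {k n : ℕ} {α : Fin k → ℕ} (hk : k ≤ n) :
    colWeight p n (pad α n) = colWeight p n α :=
  sum_congr rfl fun d _ => by rw [sum_comp_pad α hk (min · d) (Nat.zero_min d)]

theorem sum_tsub_add_tsub_le_of_lex {ι : Type*} [Fintype ι] [LinearOrder ι] {a b : ι → ℕ}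
    (ha : Antitone a) {m : ι} (hpre : ∀ j < m, a j = b j) {d : ℕ} (hd : a m ≤ d) :
    ∑ j, (a j - d) + (b m - d) ≤ ∑ j, (b j - d) := by
  have hprefix : ∑ j, (a j - d) = ∑ j : ι with j < m, (b j - d) := by
    rw [← sum_subset (filter_subset (· < m) univ) fun j _ hj => ?_]
    · exact sum_congr rfl fun j hj => by rw [hpre j (mem_filter.mp hj).2]
    · have : a j ≤ d := (ha (not_lt.mp (by simpa using hj))).trans hd
      omega
  rw [hprefix, add_comm, ← sum_insert (f := fun j => b j - d) (by simp)]
  exact sum_le_sum_of_subset (subset_univ _)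

theorem sum_pow_add_lt_sum_pow_add {p n v : ℕ} (hp : 2 ≤ p) {f g : ℕ → ℕ} (hf : Monotone f)
    (hv : v < n) (hle : ∀ d, v < d → f d ≤ g d) (hlt : f v < g v) :
    ∑ d ∈ range n, p ^ (d + f d) < ∑ d ∈ range n, p ^ (d + g d) := by
  rw [← sum_range_add_sum_Ico _ (hv : v + 1 ≤ n), ← sum_range_add_sum_Ico _ (hv : v + 1 ≤ n)]
  refine add_lt_add_of_lt_of_le ?_ (sum_le_sum fun d hd => ?_)
  · have hinj : Set.InjOn (fun d => d + f d) (range (v + 1)) :=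
      (strictMono_id.add_monotone hf).injective.injOn
    calc ∑ d ∈ range (v + 1), p ^ (d + f d)
        = ∑ x ∈ (range (v + 1)).image (fun d => d + f d), p ^ x := (sum_image hinj).symm
      _ < p ^ (v + f v + 1) := Nat.geomSum_lt hp fun x hx => by
          obtain ⟨d, hd, rfl⟩ := mem_image.mp hx
          have := hf (Nat.lt_succ_iff.mp (mem_range.mp hd))
          have := mem_range.mp hd
          omega
      _ ≤ p ^ (v + g v) := Nat.pow_le_pow_right (by omega) (by omega)
      _ ≤ ∑ d ∈ range (v + 1), p ^ (d + g d) :=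
          single_le_sum (f := fun d => p ^ (d + g d)) (fun _ _ => Nat.zero_le _)
            (self_mem_range_succ v)
  · exact Nat.pow_le_pow_right (by omega) (by have := hle d (mem_Ico.mp hd).1; omega)

theorem colWeight_lt_of_lex {p n : ℕ} (hp : 2 ≤ p) {a b : Fin n → ℕ} (ha : Antitone a)
    (hsa : ∑ j, a j = n) (hsb : ∑ j, b j = n) (hab : toLex a < toLex b) :
    colWeight p n b < colWeight p n a := by
  obtain ⟨m, hpre, hm : a m < b m⟩ := hab
  replace hpre : ∀ j < m, a j = b j := hpre
  have hmin : ∀ (c : Fin n → ℕ) d, ∑ j, min (c j) d + ∑ j, (c j - d) = ∑ j, c j := fun c d => by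
    rw [← sum_add_distrib]
    exact sum_congr rfl fun j _ => by omega
  have hcomp : ∀ d, a m ≤ d → ∑ j, min (b j) d + (b m - d) ≤ ∑ j, min (a j) d := fun d hd => by
    have := sum_tsub_add_tsub_le_of_lex ha hpre hd
    have := hmin a d
    have := hmin b d
    omega
  have hbm : b m ≤ n := hsb ▸ single_le_sum (fun j _ => Nat.zero_le (b j)) (mem_univ m)
  refine sum_pow_add_lt_sum_pow_add hp (v := a m) (fun d d' h => sum_le_sum fun j _ => ?_)
    (by omega) (fun d hd => ?_) ?_
  · exact min_le_min_left _ h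
  · exact (Nat.le_add_right _ _).trans (hcomp d hd.le)
  · have := hcomp (a m) le_rfl
    omega

theorem strictAntiOn_colWeight {p n : ℕ} (hp : 2 ≤ p) :
    StrictAntiOn (fun a : Lex (Fin n → ℕ) => colWeight p n (ofLex a))
      {a | Antitone (ofLex a) ∧ ∑ j, ofLex a j = n} :=
  fun _ ha _ hb hab => colWeight_lt_of_lex hp ha.1 ha.2 hb.2 hab

theorem psi_lt_iff_lex_general (p n k r : ℕ) [Fact p.Prime]
    (α : Fin k → ℕ) (β : Fin r → ℕ)
    (hα1 : ∀ i, 1 ≤ α i) (hαm : Monotone α) (hαs : ∑ i, α i = n)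
    (hβ1 : ∀ i, 1 ≤ β i) (hβm : Monotone β) (hβs : ∑ i, β i = n) :
    psi (∀ i, Multiplicative (ZMod (p ^ α i))) < psi (∀ i, Multiplicative (ZMod (p ^ β i))) ↔
      ∃ m : Fin n, (∀ j : Fin n, j < m → pad α n j = pad β n j) ∧ pad α n m < pad β n m := by
  have hp : p.Prime := Fact.out
  have hk : k ≤ n := by simpa [hαs] using card_nsmul_le_sum univ α 1 fun i _ => hα1 i
  have hr : r ≤ n := by simpa [hβs] using card_nsmul_le_sum univ β 1 fun i _ => hβ1 i
  have hψα := psi_pi_zmod_add_sub_one_mul_colWeight p α hαs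
  have hψβ := psi_pi_zmod_add_sub_one_mul_colWeight p β hβs
  have hp1 : 0 < p - 1 := Nat.sub_pos_of_lt hp.one_lt
  calc _ ↔ (p - 1) * colWeight p n β < (p - 1) * colWeight p n α := by omega
    _ ↔ colWeight p n (pad β n) < colWeight p n (pad α n) := by
      rw [Nat.mul_lt_mul_left hp1, colWeight_pad p hk, colWeight_pad p hr]
    _ ↔ toLex (pad α n) < toLex (pad β n) :=
      (strictAntiOn_colWeight hp.two_le).lt_iff_gt ⟨antitone_pad hβm n, (sum_pad hr).trans hβs⟩
        ⟨antitone_pad hαm n, (sum_pad hk).trans hαs⟩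
    _ ↔ _ := Iff.rfl

theorem psi_lt_iff_lex (p n k r : ℕ) [Fact p.Prime] (hn : 0 < n)
    (α : Fin k → ℕ) (β : Fin r → ℕ)
    (hα1 : ∀ i, 1 ≤ α i) (hαm : Monotone α) (hαs : ∑ i, α i = n)
    (hβ1 : ∀ i, 1 ≤ β i) (hβm : Monotone β) (hβs : ∑ i, β i = n) :
    psi (∀ i, Multiplicative (ZMod (p ^ α i))) < psi (∀ i, Multiplicative (ZMod (p ^ β i))) ↔
      ∃ m : Fin n, (∀ j : Fin n, j < m → pad α n j = pad β n j) ∧ pad α n m < pad β n m :=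
  psi_lt_iff_lex_general p n k r α β hα1 hαm hαs hβ1 hβm hβs
end

section
/- Let p be a prime, n a positive integer, and G a finite abelian p-group of order p^n. Then ψ(Z_p^n) ≤ ψ(G), i.e. among all abelian groups of order p^n, the elementary abelian group Z_p^n attains the minimum value of ψ; moreover equality holds if and only if G is isomorphic to Z_p^n. -/
/-!
In a group of order `p ^ n` every element other than `1` has order divisible by `p`, hence at
least `p`, so `ψ(G) ≥ 1 + (p ^ n - 1) p`, with equality exactly when `G` has exponent `p`. The
elementary abelian group attains the bound, and an abelian group of exponent `p` is a vector
space over `ZMod p`, so it is determined up to isomorphism by its order.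
-/

open Finset

lemma psi_congr {G H : Type*} [Monoid G] [Fintype G] [Monoid H] [Fintype H] (e : G ≃* H) :
    psi G = psi H :=
  Fintype.sum_equiv e.toEquiv _ _ fun x => (e.orderOf_eq x).symm

lemma psi_eq_one_add_sum_erase_one (G : Type*) [Monoid G] [Fintype G] [DecidableEq G] :
    psi G = 1 + ∑ x ∈ univ.erase (1 : G), orderOf x := by
  rw [psi, ← add_sum_erase univ _ (mem_univ 1), orderOf_one]

lemma sum_erase_one_const (G : Type*) [One G] [Fintype G] [DecidableEq G] (c : ℕ) :
    ∑ _x ∈ univ.erase (1 : G), c = (Fintype.card G - 1) * c := by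
  rw [sum_const, card_erase_of_mem (mem_univ 1), card_univ, smul_eq_mul]

section PGroup

variable {p : ℕ} [Fact p.Prime] {G : Type*} [Group G] [Fintype G]

lemma IsPGroup.prime_le_orderOf (hG : IsPGroup p G) {x : G} (hx : x ≠ 1) : p ≤ orderOf x :=
  Nat.le_of_dvd (orderOf_pos x) (hG.dvd_orderOf hx)

lemma IsPGroup.one_add_card_sub_one_mul_le_psi (hG : IsPGroup p G) :
    1 + (Fintype.card G - 1) * p ≤ psi G := by
  classical
  rw [psi_eq_one_add_sum_erase_one, ← sum_erase_one_const]
  gcongr with x hx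
  exact hG.prime_le_orderOf (ne_of_mem_erase hx)

lemma IsPGroup.psi_eq_one_add_card_sub_one_mul_iff (hG : IsPGroup p G) :
    psi G = 1 + (Fintype.card G - 1) * p ↔ ∀ x : G, x ^ p = 1 := by
  classical
  rw [psi_eq_one_add_sum_erase_one, ← sum_erase_one_const, add_right_inj, eq_comm,
    sum_eq_sum_iff_of_le fun x hx => hG.prime_le_orderOf (ne_of_mem_erase hx)]
  constructor
  · intro h x
    rcases eq_or_ne x 1 with rfl | hx
    · exact one_pow p
    · rw [h x (mem_erase.2 ⟨hx, mem_univ x⟩)]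
      exact pow_orderOf_eq_one x
  · exact fun h x hx => (orderOf_eq_prime (h x) (ne_of_mem_erase hx)).symm

lemma psi_eq_one_add_card_sub_one_mul_of_pow_eq_one (h : ∀ x : G, x ^ p = 1) :
    psi G = 1 + (Fintype.card G - 1) * p :=
  (IsPGroup.psi_eq_one_add_card_sub_one_mul_iff fun x => ⟨1, by rw [pow_one, h]⟩).2 h

end PGroup

lemma nonempty_linearEquiv_fin_fun_of_card_eq_pow {K V : Type*} [Field K] [Fintype K]
    [AddCommGroup V] [Module K V] [Fintype V] {n : ℕ} (hV : Fintype.card V = Fintype.card K ^ n) :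
    Nonempty (V ≃ₗ[K] (Fin n → K)) := by
  have hrank : Module.finrank K V = Module.finrank K (Fin n → K) := by
    rw [Module.finrank_fin_fun]
    exact Nat.pow_right_injective Fintype.one_lt_card (Module.card_eq_pow_finrank.symm.trans hV)
  exact ⟨.ofFinrankEq V (Fin n → K) hrank⟩

section ElementaryAbelian

variable (p n : ℕ)

lemma card_pi_zmod [NeZero p] : Fintype.card (Fin n → Multiplicative (ZMod p)) = p ^ n := by
  simp

lemma pow_eq_one_pi_zmod (x : Fin n → Multiplicative (ZMod p)) : x ^ p = 1 := by
  ext i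
  simp

lemma nonempty_mulEquiv_pi_zmod_of_pow_eq_one [Fact p.Prime] {G : Type*} [CommGroup G] [Fintype G]
    (hG : Fintype.card G = p ^ n) (h : ∀ x : G, x ^ p = 1) :
    Nonempty (G ≃* (Fin n → Multiplicative (ZMod p))) := by
  let _ : Module (ZMod p) (Additive G) := AddCommGroup.zmodModule fun x => h x.toMul
  obtain ⟨e⟩ := nonempty_linearEquiv_fin_fun_of_card_eq_pow (K := ZMod p) (V := Additive G)
    (by rw [ZMod.card]; exact (Fintype.card_congr Additive.toMul).trans hG)
  exact ⟨(MulEquiv.multiplicativeAdditive G).symm.trans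
    (e.toAddEquiv.toMultiplicative.trans (MulEquiv.piMultiplicative _))⟩

end ElementaryAbelian

theorem psi_min_elementary_abelian_general (p n : ℕ) [Fact p.Prime]
    (G : Type*) [CommGroup G] [Fintype G] (hG : Fintype.card G = p ^ n) :
    psi (Fin n → Multiplicative (ZMod p)) ≤ psi G ∧
      (psi (Fin n → Multiplicative (ZMod p)) = psi G ↔
        Nonempty (G ≃* (Fin n → Multiplicative (ZMod p)))) := by
  have hGp : IsPGroup p G := .of_card (by rw [Nat.card_eq_fintype_card, hG])
  have hpsi : psi (Fin n → Multiplicative (ZMod p)) = 1 + (Fintype.card G - 1) * p := by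
    rw [psi_eq_one_add_card_sub_one_mul_of_pow_eq_one (pow_eq_one_pi_zmod p n),
      card_pi_zmod, hG]
  rw [hpsi]
  refine ⟨hGp.one_add_card_sub_one_mul_le_psi, fun h => ?_, fun ⟨e⟩ => ?_⟩
  · exact nonempty_mulEquiv_pi_zmod_of_pow_eq_one p n hG
      (hGp.psi_eq_one_add_card_sub_one_mul_iff.1 h.symm)
  · rw [← hpsi, psi_congr e]

theorem psi_min_elementary_abelian (p n : ℕ) [Fact p.Prime] (hn : 0 < n)
    (G : Type*) [CommGroup G] [Fintype G] (hG : Fintype.card G = p ^ n) :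
    psi (Fin n → Multiplicative (ZMod p)) ≤ psi G ∧
      (psi (Fin n → Multiplicative (ZMod p)) = psi G ↔
        Nonempty (G ≃* (Fin n → Multiplicative (ZMod p)))) :=
  psi_min_elementary_abelian_general p n G hG
end

section
/- Let p be a prime, n a positive integer, and G a finite abelian p-group of order p^n. Then ψ(G) ≤ ψ(Z_{p^n}), i.e. among all abelian groups of order p^n, the cyclic group Z_{p^n} attains the maximum value of ψ; moreover equality holds if and only if G is cyclic. -/
open Finset

open scoped Classical in
/-- number of elements `a` with `a ^ m = 1`. -/
noncomputable def fc (G : Type*) [Monoid G] [Fintype G] (m : ℕ) : ℕ :=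
  (Finset.univ.filter fun a : G => a ^ m = 1).card

lemma psi_identity (p n : ℕ) [hp : Fact p.Prime] (G : Type*) [Group G] [Fintype G]
    (hG : Fintype.card G = p ^ n) :
    psi G + ∑ k ∈ range n, (p ^ (k + 1) - p ^ k) * fc G (p ^ k) = p ^ n * p ^ n := by
  classical
  have hp1 : 1 < p := hp.out.one_lt
  have key : ∀ a : G,
      orderOf a + ∑ k ∈ range n, (if a ^ p ^ k = 1 then p ^ (k + 1) - p ^ k else 0)
        = p ^ n := by
    intro a
    obtain ⟨e, he, hoe⟩ := (Nat.dvd_prime_pow hp.out).mp (hG ▸ orderOf_dvd_card)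
    have hcond : ∀ k : ℕ, (a ^ p ^ k = 1) ↔ e ≤ k := by
      intro k
      rw [← orderOf_dvd_iff_pow_eq_one, hoe, Nat.pow_dvd_pow_iff_le_right hp1]
    have h1 : ∑ k ∈ range n, (if a ^ p ^ k = 1 then p ^ (k + 1) - p ^ k else 0)
        = ∑ k ∈ Finset.Ico e n, (p ^ (k + 1) - p ^ k) := by
      rw [← Finset.sum_filter]
      congr 1
      ext k
      simp only [Finset.mem_filter, Finset.mem_range, Finset.mem_Ico, hcond]
      tauto
    have h2 : ∑ k ∈ Finset.Ico e n, (p ^ (k + 1) - p ^ k) = p ^ n - p ^ e := by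
      rw [Finset.sum_Ico_eq_sum_range]
      have := Finset.sum_range_tsub (f := fun i => p ^ (e + i))
        (fun i j hij => Nat.pow_le_pow_right (Nat.one_le_of_lt hp1) (by omega)) (n - e)
      simpa [Nat.add_sub_cancel' he, show e + (n - e) = n by omega] using
        (Finset.sum_congr rfl fun i _ => by ring_nf).trans this
    rw [h1, h2, hoe, Nat.add_sub_cancel' (Nat.pow_le_pow_right (Nat.one_le_of_lt hp1) he)]
  have swap : ∑ k ∈ range n, (p ^ (k + 1) - p ^ k) * fc G (p ^ k)
      = ∑ a : G, ∑ k ∈ range n, (if a ^ p ^ k = 1 then p ^ (k + 1) - p ^ k else 0) := by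
    rw [Finset.sum_comm]
    refine Finset.sum_congr rfl fun k _ => ?_
    rw [fc, ← Finset.sum_filter, Finset.sum_const, smul_eq_mul, mul_comm]
  calc psi G + ∑ k ∈ range n, (p ^ (k + 1) - p ^ k) * fc G (p ^ k)
      = ∑ a : G, (orderOf a + ∑ k ∈ range n,
          (if a ^ p ^ k = 1 then p ^ (k + 1) - p ^ k else 0)) := by
        rw [psi, swap, Finset.sum_add_distrib]
    _ = ∑ _a : G, p ^ n := Finset.sum_congr rfl fun a _ => key a
    _ = p ^ n * p ^ n := by rw [Finset.sum_const, Finset.card_univ, smul_eq_mul, hG]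

lemma fc_ge (p k : ℕ) [Fact p.Prime] (G : Type*) [Group G] [Fintype G]
    (h : p ^ k ∣ Fintype.card G) : p ^ k ≤ fc G (p ^ k) := by
  classical
  obtain ⟨K, hK⟩ := Sylow.exists_subgroup_card_pow_prime p
    (G := G) (n := k) (by rwa [Nat.card_eq_fintype_card])
  have hmem : ∀ x : K, (x : G) ^ p ^ k = 1 := by
    intro x
    have h1 : x ^ p ^ k = 1 := by rw [← hK]; exact pow_card_eq_one'
    calc (x : G) ^ p ^ k = ((x ^ p ^ k : K) : G) := by push_cast; rfl
      _ = 1 := by rw [h1]; rfl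
  have hinj : Function.Injective
      (fun x : K => (⟨(x : G), hmem x⟩ : {a : G // a ^ p ^ k = 1})) := by
    intro a b hab
    simp only [Subtype.mk.injEq] at hab
    exact Subtype.ext hab
  calc p ^ k = Nat.card K := hK.symm
    _ = Fintype.card K := Nat.card_eq_fintype_card
    _ ≤ Fintype.card {a : G // a ^ p ^ k = 1} :=
        Fintype.card_le_of_injective _ hinj
    _ = fc G (p ^ k) := by
        unfold fc
        exact Fintype.card_subtype _

lemma fc_le_cyclic (G : Type*) [Group G] [Fintype G] [IsCyclic G] {m : ℕ} (hm : 0 < m) :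
    fc G m ≤ m := by
  classical
  have := IsCyclic.card_pow_eq_one_le (α := G) hm
  rw [fc]
  convert this using 2

lemma fc_card (G : Type*) [Group G] [Fintype G] : fc G (Fintype.card G) = Fintype.card G := by
  classical
  rw [fc, show (Finset.univ.filter fun a : G => a ^ Fintype.card G = 1) = Finset.univ from
    by ext a; simp [pow_card_eq_one], Finset.card_univ]

theorem psi_max_cyclic (p n : ℕ) [Fact p.Prime] (hn : 0 < n)
    (G : Type*) [CommGroup G] [Fintype G] (hG : Fintype.card G = p ^ n) :
    psi G ≤ psi (Multiplicative (ZMod (p ^ n))) ∧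
      (psi G = psi (Multiplicative (ZMod (p ^ n))) ↔ IsCyclic G) := by
  classical
  have hp : p.Prime := Fact.out
  have hp1 : 1 < p := hp.one_lt
  set C := Multiplicative (ZMod (p ^ n)) with hCdef
  have hC : Fintype.card C = p ^ n := (Fintype.card_multiplicative _).trans (ZMod.card _)
  have hfcC : ∀ k ≤ n, fc C (p ^ k) = p ^ k := by
    intro k hk
    exact le_antisymm (fc_le_cyclic C (pow_pos hp.pos k))
      (fc_ge p k C (by rw [hC]; exact pow_dvd_pow p hk))
  have hCeq : psi (Multiplicative (ZMod (p ^ n))) = psi C := rfl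
  rw [hCeq]
  have idG := psi_identity p n G hG
  have idC := psi_identity p n C hC
  have hterm : ∀ k ∈ range n,
      (p ^ (k + 1) - p ^ k) * fc C (p ^ k) ≤ (p ^ (k + 1) - p ^ k) * fc G (p ^ k) := by
    intro k hk
    rw [hfcC k (le_of_lt (Finset.mem_range.mp hk))]
    exact Nat.mul_le_mul_left _ (fc_ge p k G (by rw [hG]; exact pow_dvd_pow p (le_of_lt (Finset.mem_range.mp hk))))
  have hsum : ∑ k ∈ range n, (p ^ (k + 1) - p ^ k) * fc C (p ^ k)
      ≤ ∑ k ∈ range n, (p ^ (k + 1) - p ^ k) * fc G (p ^ k) :=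
    Finset.sum_le_sum hterm
  have hineq : psi G ≤ psi C := by omega
  refine ⟨hineq, ⟨fun heq => ?_, fun hcyc => ?_⟩⟩
  · -- equality → cyclic
    have hsumeq : ∑ k ∈ range n, (p ^ (k + 1) - p ^ k) * fc C (p ^ k)
        = ∑ k ∈ range n, (p ^ (k + 1) - p ^ k) * fc G (p ^ k) := by omega
    have heach := (Finset.sum_eq_sum_iff_of_le hterm).mp hsumeq
    have hfcG : ∀ k ≤ n, fc G (p ^ k) ≤ p ^ k := by
      intro k hk
      rcases eq_or_lt_of_le hk with h | h
      · subst h; rw [← hG, fc_card]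
      · have := heach k (Finset.mem_range.mpr h)
        rw [hfcC k hk] at this
        have hw : 0 < p ^ (k + 1) - p ^ k := by
          have : p ^ k < p ^ (k + 1) := Nat.pow_lt_pow_right hp1 (Nat.lt_succ_self k)
          omega
        exact le_of_eq (Nat.eq_of_mul_eq_mul_left hw this.symm)
    apply isCyclic_of_card_pow_eq_one_le
    intro m hm
    obtain ⟨k, hk, hd⟩ := (Nat.dvd_prime_pow hp).mp (Nat.gcd_dvd_right m (p ^ n))
    have hset : (Finset.univ.filter fun a : G => a ^ m = 1)
        = (Finset.univ.filter fun a : G => a ^ p ^ k = 1) := by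
      ext a
      have ho : orderOf a ∣ p ^ n := hG ▸ orderOf_dvd_card
      simp only [Finset.mem_filter, Finset.mem_univ, true_and,
        ← orderOf_dvd_iff_pow_eq_one, ← hd, Nat.dvd_gcd_iff]
      exact ⟨fun h1 => ⟨h1, ho⟩, fun h1 => h1.1⟩
    calc #{a : G | a ^ m = 1} = (Finset.univ.filter fun a : G => a ^ m = 1).card := by
          congr 1
      _ = (Finset.univ.filter fun a : G => a ^ p ^ k = 1).card := by rw [hset]
      _ = fc G (p ^ k) := by unfold fc; congr 1
      _ ≤ p ^ k := hfcG k hk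
      _ ≤ m := hd ▸ Nat.le_of_dvd hm (Nat.gcd_dvd_left m (p ^ n))
  · -- cyclic → equality
    have e : G ≃* C := mulEquivOfCyclicCardEq
      (by rw [Nat.card_eq_fintype_card, Nat.card_eq_fintype_card, hG, hC])
    rw [psi, psi]
    exact Fintype.sum_bijective e e.bijective _ _
      (fun a => (orderOf_injective e.toMonoidHom e.injective a).symm)
end

section
/- There exists a finite abelian group G such that |G| divides ψ(G); in fact, for G = Z₁₃ × Z₁₃ × Z₂₃ one has |G| = 3887 and ψ(G) = 1107795 = 3887 · 285, so ψ(G) ≡ 0 (mod |G|). -/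
lemma orderOf_mult_zmod (p : ℕ) [Fact p.Prime] (x : Multiplicative (ZMod p))
    (hx : x ≠ 1) : orderOf x = p := by
  have hcard : Fintype.card (Multiplicative (ZMod p)) = p := by
    simp [ZMod.card]
  have hdvd : orderOf x ∣ p := by
    have := orderOf_dvd_card (x := x)
    rwa [hcard] at this
  rcases (Nat.Prime.eq_one_or_self_of_dvd (Fact.out) _ hdvd) with h | h
  · exact absurd (orderOf_eq_one_iff.mp h) hx
  · exact h

lemma sum_order (p : ℕ) [Fact p.Prime] [NeZero p] (f : ℕ → ℕ) :
    ∑ x : Multiplicative (ZMod p), f (orderOf x) = f 1 + (p - 1) * f p := by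
  classical
  rw [← Finset.sum_compl_add_sum ({1} : Finset (Multiplicative (ZMod p)))]
  have h1 : ∑ x ∈ ({1} : Finset (Multiplicative (ZMod p))), f (orderOf x) = f 1 := by
    simp
  have h2 : ∑ x ∈ ({1} : Finset (Multiplicative (ZMod p)))ᶜ, f (orderOf x)
      = (p - 1) * f p := by
    rw [Finset.sum_congr rfl (fun x hx => by
      rw [orderOf_mult_zmod p x (by simpa using Finset.mem_compl.mp hx)]),
      Finset.sum_const, Finset.card_compl, Finset.card_singleton, smul_eq_mul]
    congr 1
    simp [ZMod.card]
  rw [h1, h2]; ring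

theorem card_dvd_psi_example :
    Fintype.card (Multiplicative (ZMod 13) × Multiplicative (ZMod 13) ×
        Multiplicative (ZMod 23)) = 3887 ∧
    psi (Multiplicative (ZMod 13) × Multiplicative (ZMod 13) ×
        Multiplicative (ZMod 23)) = 1107795 ∧
    1107795 = 3887 * 285 ∧
    Fintype.card (Multiplicative (ZMod 13) × Multiplicative (ZMod 13) ×
        Multiplicative (ZMod 23)) ∣
      psi (Multiplicative (ZMod 13) × Multiplicative (ZMod 13) ×
        Multiplicative (ZMod 23)) := by
  have h13 : Fact (Nat.Prime 13) := ⟨by norm_num⟩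
  have h23 : Fact (Nat.Prime 23) := ⟨by norm_num⟩
  have hcard : Fintype.card (Multiplicative (ZMod 13) × Multiplicative (ZMod 13) ×
      Multiplicative (ZMod 23)) = 3887 := by
    simp [ZMod.card]
  have hpsi : psi (Multiplicative (ZMod 13) × Multiplicative (ZMod 13) ×
      Multiplicative (ZMod 23)) = 1107795 := by
    unfold psi
    rw [Fintype.sum_prod_type]
    have : ∀ x : Multiplicative (ZMod 13),
        ∑ y : Multiplicative (ZMod 13) × Multiplicative (ZMod 23),
          orderOf ((x, y) : _ × _) =
        ∑ y : Multiplicative (ZMod 13), ∑ z : Multiplicative (ZMod 23),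
          Nat.lcm (orderOf x) (Nat.lcm (orderOf y) (orderOf z)) := by
      intro x
      rw [Fintype.sum_prod_type]
      refine Finset.sum_congr rfl fun y _ => Finset.sum_congr rfl fun z _ => ?_
      rw [Prod.orderOf, Prod.orderOf]
    rw [Finset.sum_congr rfl fun x _ => this x]
    have inner : ∀ a b : ℕ, ∑ z : Multiplicative (ZMod 23),
        Nat.lcm a (Nat.lcm b (orderOf z)) =
        Nat.lcm a (Nat.lcm b 1) + 22 * Nat.lcm a (Nat.lcm b 23) := by
      intro a b
      exact sum_order 23 (fun n => Nat.lcm a (Nat.lcm b n))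
    have mid : ∀ a : ℕ, ∑ y : Multiplicative (ZMod 13),
        (Nat.lcm a (Nat.lcm (orderOf y) 1) + 22 * Nat.lcm a (Nat.lcm (orderOf y) 23)) =
        (Nat.lcm a (Nat.lcm 1 1) + 22 * Nat.lcm a (Nat.lcm 1 23))
        + 12 * (Nat.lcm a (Nat.lcm 13 1) + 22 * Nat.lcm a (Nat.lcm 13 23)) := by
      intro a
      exact sum_order 13 (fun n => Nat.lcm a (Nat.lcm n 1) + 22 * Nat.lcm a (Nat.lcm n 23))
    calc ∑ x : Multiplicative (ZMod 13), ∑ y : Multiplicative (ZMod 13),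
          ∑ z : Multiplicative (ZMod 23),
            Nat.lcm (orderOf x) (Nat.lcm (orderOf y) (orderOf z))
        = ∑ x : Multiplicative (ZMod 13),
            ((Nat.lcm (orderOf x) (Nat.lcm 1 1) + 22 * Nat.lcm (orderOf x) (Nat.lcm 1 23))
            + 12 * (Nat.lcm (orderOf x) (Nat.lcm 13 1)
              + 22 * Nat.lcm (orderOf x) (Nat.lcm 13 23))) := by
          refine Finset.sum_congr rfl fun x _ => ?_
          rw [Finset.sum_congr rfl fun y _ => inner (orderOf x) (orderOf y), mid]
      _ = 1107795 := by
          rw [sum_order 13 (fun n =>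
            (Nat.lcm n (Nat.lcm 1 1) + 22 * Nat.lcm n (Nat.lcm 1 23))
            + 12 * (Nat.lcm n (Nat.lcm 13 1) + 22 * Nat.lcm n (Nat.lcm 13 23)))]
          norm_num [Nat.lcm]
  exact ⟨hcard, hpsi, by norm_num, by rw [hcard, hpsi]; norm_num⟩
end

section
/- Let p be a prime. Then ψ(Z_p × Z_p) = p³ − p + 1 < ψ(Z_{p²}) = p⁴ − p³ + p² − p + 1; ψ(Z_p³) = p⁴ − p + 1 < ψ(Z_p × Z_{p²}) = p⁵ − p⁴ + p³ − p + 1 < ψ(Z_{p³}) = p⁶ − p⁵ + p⁴ − p³ + p² − p + 1. -/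
open Finset

lemma psi_cyclic_s18 (n : ℕ) [NeZero n] :
    psi (Multiplicative (ZMod n)) = ∑ d ∈ n.divisors, d * d.totient := by
  classical
  have hcard : Fintype.card (Multiplicative (ZMod n)) = n := by
    rw [Fintype.card_multiplicative]; exact ZMod.card n
  have hmaps : ∀ a ∈ (univ : Finset (Multiplicative (ZMod n))), orderOf a ∈ n.divisors := by
    intro a _
    refine Nat.mem_divisors.2 ⟨?_, NeZero.ne n⟩
    simpa [hcard] using orderOf_dvd_card (x := a)
  rw [psi, ← Finset.sum_fiberwise_of_maps_to hmaps]
  refine Finset.sum_congr rfl fun d hd => ?_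
  have hd' : d ∣ Fintype.card (Multiplicative (ZMod n)) := by
    rw [hcard]; exact (Nat.mem_divisors.1 hd).1
  have hcount : #{a : Multiplicative (ZMod n) | orderOf a = d} = d.totient :=
    IsCyclic.card_orderOf_eq_totient hd'
  calc (∑ a ∈ {a : Multiplicative (ZMod n) | orderOf a = d}, orderOf a)
      = ∑ _a ∈ {a : Multiplicative (ZMod n) | orderOf a = d}, d := by
        refine Finset.sum_congr rfl fun a ha => ?_
        simpa using (Finset.mem_filter.1 ha).2
    _ = d * d.totient := by rw [Finset.sum_const, hcount, smul_eq_mul, mul_comm]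

lemma psi_exp_p {p : ℕ} [Fact p.Prime] (G : Type*) [Group G] [Fintype G]
    (h : ∀ a : G, a ^ p = 1) : psi G + p = p * Fintype.card G + 1 := by
  classical
  have ho : ∀ a : G, a ≠ 1 → orderOf a = p := fun a ha => orderOf_eq_prime (h a) ha
  rw [psi, ← Finset.sum_erase_add _ _ (Finset.mem_univ (1 : G)), orderOf_one]
  have hsum : ∑ a ∈ (univ : Finset G).erase 1, orderOf a = #((univ : Finset G).erase 1) * p := by
    rw [Finset.sum_congr rfl fun a ha => ho a (Finset.ne_of_mem_erase ha), Finset.sum_const,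
      smul_eq_mul]
  rw [hsum, Finset.card_erase_of_mem (Finset.mem_univ 1), Finset.card_univ]
  have hcard : 1 ≤ Fintype.card G := Fintype.card_pos
  obtain ⟨k, hk⟩ := Nat.exists_eq_add_of_le hcard
  rw [hk, Nat.add_sub_cancel_left]
  ring

lemma pow_eq_one_zmod_p (p : ℕ) (a : Multiplicative (ZMod p)) : a ^ p = 1 := by
  apply Multiplicative.toAdd.injective
  simp [toAdd_pow, nsmul_eq_mul, ZMod.natCast_self]

lemma dvd_orderOf_of_card_pow {p k : ℕ} (hp : p.Prime) {H : Type*} [Group H] [Fintype H]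
    (hcard : Fintype.card H = p ^ k) (y : H) (hy : y ≠ 1) : p ∣ orderOf y := by
  have h1 : orderOf y ∣ p ^ k := by rw [← hcard]; exact orderOf_dvd_card
  obtain ⟨j, hj, hjy⟩ := (Nat.dvd_prime_pow hp).1 h1
  have hj0 : j ≠ 0 := by
    rintro rfl
    simp only [pow_zero] at hjy
    exact hy (orderOf_eq_one_iff.1 hjy)
  rw [hjy]
  exact dvd_pow_self p hj0

lemma psi_prod {p : ℕ} [Fact p.Prime] [NeZero p] (H : Type*) [Group H] [Fintype H]
    (hH : ∀ y : H, y ≠ 1 → p ∣ orderOf y) :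
    psi (Multiplicative (ZMod p) × H) + p = psi (Multiplicative (ZMod p)) + p * psi H := by
  classical
  have hp : p.Prime := Fact.out
  haveI : NeZero p := ⟨hp.ne_zero⟩
  have hcard : Fintype.card (Multiplicative (ZMod p)) = p := by
    rw [Fintype.card_multiplicative]; exact ZMod.card p
  have hx : ∀ x : Multiplicative (ZMod p), orderOf x ∣ p := by
    intro x; simpa [hcard] using orderOf_dvd_card (x := x)
  have key : psi (Multiplicative (ZMod p) × H) =
      ∑ y : H, ∑ x : Multiplicative (ZMod p), Nat.lcm (orderOf x) (orderOf y) := by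
    rw [psi, Fintype.sum_prod_type, Finset.sum_comm]
    simp only [Prod.orderOf]
  rw [key, ← Finset.sum_erase_add _ _ (Finset.mem_univ (1 : H))]
  have h1 : (∑ x : Multiplicative (ZMod p), Nat.lcm (orderOf x) (orderOf (1 : H))) =
      psi (Multiplicative (ZMod p)) := by
    simp [psi, orderOf_one, Nat.lcm_one_right]
  have h2 : ∀ y ∈ (univ : Finset H).erase 1,
      (∑ x : Multiplicative (ZMod p), Nat.lcm (orderOf x) (orderOf y)) = p * orderOf y := by
    intro y hy
    have hpy : p ∣ orderOf y := hH y (Finset.ne_of_mem_erase hy)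
    have hlcm : ∀ x : Multiplicative (ZMod p),
        Nat.lcm (orderOf x) (orderOf y) = orderOf y := fun x =>
      Nat.dvd_antisymm (Nat.lcm_dvd ((hx x).trans hpy) dvd_rfl) (Nat.dvd_lcm_right _ _)
    rw [Finset.sum_congr rfl fun x _ => hlcm x, Finset.sum_const, Finset.card_univ, hcard,
      smul_eq_mul]
  rw [Finset.sum_congr rfl h2, h1, ← Finset.mul_sum]
  have h3 : (∑ y ∈ (univ : Finset H).erase 1, orderOf y) + 1 = psi H := by
    rw [psi, ← Finset.sum_erase_add _ _ (Finset.mem_univ (1 : H)), orderOf_one]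
  rw [← h3, mul_add, mul_one]
  omega


lemma psi_ineq1 {p : ℕ} (hp2 : 2 ≤ p) : p ^ 3 + p ^ 3 < p ^ 4 + p ^ 2 := by
  obtain ⟨q, rfl⟩ : ∃ q, p = q + 2 := ⟨p - 2, by omega⟩
  ring_nf
  omega

lemma psi_ineq2 {p : ℕ} (hp2 : 2 ≤ p) : p ^ 4 + p ^ 4 < p ^ 5 + p ^ 3 := by
  obtain ⟨q, rfl⟩ : ∃ q, p = q + 2 := ⟨p - 2, by omega⟩
  ring_nf
  omega

lemma psi_ineq3 {p : ℕ} (hp2 : 2 ≤ p) :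
    p ^ 5 + p ^ 5 + p ^ 3 + p ^ 3 < p ^ 6 + p ^ 4 + p ^ 4 + p ^ 2 := by
  obtain ⟨q, rfl⟩ : ∃ q, p = q + 2 := ⟨p - 2, by omega⟩
  ring_nf
  omega

set_option maxHeartbeats 1600000 in
theorem psi_order_p_sq_p_cubed (p : ℕ) [Fact p.Prime] :
    psi (Multiplicative (ZMod p) × Multiplicative (ZMod p)) = p ^ 3 - p + 1 ∧
    psi (Multiplicative (ZMod (p ^ 2))) = p ^ 4 - p ^ 3 + p ^ 2 - p + 1 ∧
    psi (Multiplicative (ZMod p) × Multiplicative (ZMod p)) <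
      psi (Multiplicative (ZMod (p ^ 2))) ∧
    psi (Multiplicative (ZMod p) × Multiplicative (ZMod p) × Multiplicative (ZMod p)) =
      p ^ 4 - p + 1 ∧
    psi (Multiplicative (ZMod p) × Multiplicative (ZMod (p ^ 2))) =
      p ^ 5 - p ^ 4 + p ^ 3 - p + 1 ∧
    psi (Multiplicative (ZMod (p ^ 3))) = p ^ 6 - p ^ 5 + p ^ 4 - p ^ 3 + p ^ 2 - p + 1 ∧
    psi (Multiplicative (ZMod p) × Multiplicative (ZMod p) × Multiplicative (ZMod p)) <
      psi (Multiplicative (ZMod p) × Multiplicative (ZMod (p ^ 2))) ∧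
    psi (Multiplicative (ZMod p) × Multiplicative (ZMod (p ^ 2))) <
      psi (Multiplicative (ZMod (p ^ 3))) := by
  have hp : p.Prime := Fact.out
  have hp2 : 2 ≤ p := hp.two_le
  haveI : NeZero p := ⟨hp.ne_zero⟩
  haveI : NeZero (p ^ 2) := ⟨pow_ne_zero _ hp.ne_zero⟩
  haveI : NeZero (p ^ 3) := ⟨pow_ne_zero _ hp.ne_zero⟩
  have hp1 : (1:ℕ) ≤ p := hp.one_le
  have l12 : p ≤ p ^ 2 := by nlinarith
  have l13 : p ≤ p ^ 3 := by nlinarith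
  have l14 : p ≤ p ^ 4 := by nlinarith
  have l34 : p ^ 3 ≤ p ^ 4 := by nlinarith
  have l45 : p ^ 4 ≤ p ^ 5 := by nlinarith
  have l56 : p ^ 5 ≤ p ^ 6 := by nlinarith
  have l2 : p ≤ p ^ 4 - p ^ 3 + p ^ 2 := le_trans l12 (Nat.le_add_left _ _)
  have l3 : p ≤ p ^ 5 - p ^ 4 + p ^ 3 := le_trans l13 (Nat.le_add_left _ _)
  have l4 : p ^ 3 ≤ p ^ 6 - p ^ 5 + p ^ 4 := by
    have : p ^ 3 ≤ p ^ 4 := l34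
    exact le_trans this (Nat.le_add_left _ _)
  have l5 : p ≤ p ^ 6 - p ^ 5 + p ^ 4 - p ^ 3 + p ^ 2 := le_trans l12 (Nat.le_add_left _ _)
  -- value of psi (Z_p)
  have A : psi (Multiplicative (ZMod p)) + p = p ^ 2 + 1 := by
    have h := psi_exp_p (p := p) (Multiplicative (ZMod p)) (pow_eq_one_zmod_p p)
    rw [Fintype.card_multiplicative, ZMod.card] at h
    rw [sq]; exact h
  have vZp : psi (Multiplicative (ZMod p)) = p ^ 2 - p + 1 := by omega
  -- product formulas
  have hcard1 : Fintype.card (Multiplicative (ZMod p)) = p ^ 1 := by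
    rw [Fintype.card_multiplicative, ZMod.card, pow_one]
  have hcard2 : Fintype.card (Multiplicative (ZMod (p ^ 2))) = p ^ 2 := by
    rw [Fintype.card_multiplicative, ZMod.card]
  have hcardP : Fintype.card (Multiplicative (ZMod p) × Multiplicative (ZMod p)) = p ^ 2 := by
    rw [Fintype.card_prod, Fintype.card_multiplicative, ZMod.card, sq]
  have D := psi_prod (p := p) _ (dvd_orderOf_of_card_pow hp hcard1)
  have E := psi_prod (p := p) _ (dvd_orderOf_of_card_pow hp hcardP)
  have F := psi_prod (p := p) _ (dvd_orderOf_of_card_pow hp hcard2)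
  -- cyclic values
  have hφ2 : (p ^ 2).totient = p * (p - 1) := by
    simpa using Nat.totient_prime_pow_succ hp 1
  have hφ3 : (p ^ 3).totient = p ^ 2 * (p - 1) := by
    simpa using Nat.totient_prime_pow_succ hp 2
  have B : psi (Multiplicative (ZMod (p ^ 2))) =
      ∑ i ∈ Finset.range 3, p ^ i * (p ^ i).totient := by
    rw [psi_cyclic_s18]; exact Nat.sum_divisors_prime_pow hp
  rw [Finset.sum_range_succ, Finset.sum_range_succ, Finset.sum_range_one, pow_zero,
    pow_one, Nat.totient_one, Nat.totient_prime hp, hφ2, mul_one] at B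
  have C : psi (Multiplicative (ZMod (p ^ 3))) =
      ∑ i ∈ Finset.range 4, p ^ i * (p ^ i).totient := by
    rw [psi_cyclic_s18]; exact Nat.sum_divisors_prime_pow hp
  rw [Finset.sum_range_succ, Finset.sum_range_succ, Finset.sum_range_succ,
    Finset.sum_range_one, pow_zero, pow_one, Nat.totient_one, Nat.totient_prime hp,
    hφ2, hφ3, mul_one] at C
  have vB : psi (Multiplicative (ZMod (p ^ 2))) = p ^ 4 - p ^ 3 + p ^ 2 - p + 1 := by
    zify [hp1, l34, l2] at B ⊢
    linear_combination B
  have vC : psi (Multiplicative (ZMod (p ^ 3))) =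
      p ^ 6 - p ^ 5 + p ^ 4 - p ^ 3 + p ^ 2 - p + 1 := by
    zify [hp1, l56, l4, l5] at C ⊢
    linear_combination C
  have vD : psi (Multiplicative (ZMod p) × Multiplicative (ZMod p)) = p ^ 3 - p + 1 := by
    rw [vZp] at D
    zify [l12, l13] at D ⊢
    linear_combination D
  have vE : psi (Multiplicative (ZMod p) × Multiplicative (ZMod p) ×
      Multiplicative (ZMod p)) = p ^ 4 - p + 1 := by
    rw [vZp, vD] at E
    zify [l12, l13, l14] at E ⊢
    linear_combination E
  have vF : psi (Multiplicative (ZMod p) × Multiplicative (ZMod (p ^ 2))) =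
      p ^ 5 - p ^ 4 + p ^ 3 - p + 1 := by
    rw [vZp, vB] at F
    zify [hp1, l12, l34, l45, l2, l3] at F ⊢
    linear_combination F
  refine ⟨vD, vB, ?_, vE, vF, vC, ?_, ?_⟩
  · rw [vD, vB]
    have h := psi_ineq1 hp2
    omega
  · rw [vE, vF]
    have h := psi_ineq2 hp2
    omega
  · rw [vF, vC]
    have h := psi_ineq3 hp2
    omega
end
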